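/- arXiv:0905.1142 — 7 statements merged into one kernel-verified Lean document; each statement's English description precedes it below -/
import Mathlib

section
/- Let μ < 1. There exists a constant C > 0, depending only on n, b and μ, such that for every smooth function φ : ℝⁿ → ℝ with compact support contained in B, one has ∫_B φ(m)² ρ(m)^{μ−2} dm ≤ C ∫_B (‖∇φ(m)‖² + φ(m)²) ρ(m)^μ dm. -/
open MeasureTheory InnerProductSpace

private lemma hardy_sum_single_smul (n : ℕ) (m : EuclideanSpace ℝ (Fin n)) :
    ∑ i : Fin n, m i • EuclideanSpace.single i (1:ℝ) = m := by
  simpa [EuclideanSpace.basisFun_apply, EuclideanSpace.basisFun_repr] using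
    (EuclideanSpace.basisFun (Fin n) ℝ).sum_repr m

private lemma hardy_rho_pos {n : ℕ} {b : ℝ} (hb : 0 < b) {m : EuclideanSpace ℝ (Fin n)}
    (hm : m ∈ Metric.ball (0 : EuclideanSpace ℝ (Fin n)) (Real.sqrt b)) : 0 < b - ‖m‖ ^ 2 := by
  rw [Metric.mem_ball, dist_zero_right] at hm
  have h2 : ‖m‖ ^ 2 < Real.sqrt b ^ 2 :=
    pow_lt_pow_left₀ hm (norm_nonneg m) two_ne_zero
  rw [Real.sq_sqrt hb.le] at h2; linarith

private lemma hardy_amgm {ε u v : ℝ} (hε : 0 < ε) : 2 * (u * v) ≤ ε * u ^ 2 + v ^ 2 / ε := by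
  have key : ε * u ^ 2 + v ^ 2 / ε - 2 * (u * v) = (ε * u - v) ^ 2 / ε := by
    field_simp; ring
  have h2 : 0 ≤ (ε * u - v) ^ 2 / ε := div_nonneg (sq_nonneg _) hε.le
  linarith

/-- Integrability and set-integral identity for functions of the form `u * ρ^s` with
`u` continuous and vanishing off a compact subset `S` of the ball. -/
private lemma hardy_good {n : ℕ} {b : ℝ} (hb : 0 < b) {S : Set (EuclideanSpace ℝ (Fin n))}
    (hS : IsCompact S) (hSB : S ⊆ Metric.ball (0 : EuclideanSpace ℝ (Fin n)) (Real.sqrt b))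
    (u : EuclideanSpace ℝ (Fin n) → ℝ) (hu : Continuous u)
    (hu0 : ∀ m, m ∉ S → u m = 0) (s : ℝ) :
    Integrable (fun m : EuclideanSpace ℝ (Fin n) => u m * (b - ‖m‖ ^ 2) ^ s) ∧
    ∫ m in Metric.ball (0 : EuclideanSpace ℝ (Fin n)) (Real.sqrt b),
        u m * (b - ‖m‖ ^ 2) ^ s
      = ∫ m, u m * (b - ‖m‖ ^ 2) ^ s := by
  have hcont : Continuous fun m : EuclideanSpace ℝ (Fin n) => u m * (b - ‖m‖ ^ 2) ^ s := by
    rw [continuous_iff_continuousAt]; intro x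
    by_cases hx : x ∈ Metric.ball (0 : EuclideanSpace ℝ (Fin n)) (Real.sqrt b)
    · exact hu.continuousAt.mul
        (((continuous_const.sub (continuous_norm.pow 2)).continuousAt).rpow_const
          (Or.inl (hardy_rho_pos hb hx).ne'))
    · have hxS : x ∉ S := fun h => hx (hSB h)
      have hev : (fun m : EuclideanSpace ℝ (Fin n) => u m * (b - ‖m‖ ^ 2) ^ s)
          =ᶠ[nhds x] fun _ => 0 := by
        filter_upwards [hS.isClosed.isOpen_compl.mem_nhds hxS] with y hy
        simp [hu0 y hy]
      exact hev.continuousAt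
  have hcs : HasCompactSupport fun m : EuclideanSpace ℝ (Fin n) => u m * (b - ‖m‖ ^ 2) ^ s :=
    HasCompactSupport.intro hS fun x hx => by simp [hu0 x hx]
  refine ⟨hcont.integrable_of_hasCompactSupport hcs,
    setIntegral_eq_integral_of_forall_compl_eq_zero fun x hx => ?_⟩
  simp [hu0 x fun h => hx (hSB h)]

/-- `∫ fderiv f x v = 0` for `C²` compactly supported `f`. -/
private lemma hardy_ibp {n : ℕ} (f : EuclideanSpace ℝ (Fin n) → ℝ) (hf : ContDiff ℝ 2 f)
    (hcs : HasCompactSupport f) (v : EuclideanSpace ℝ (Fin n)) :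
    ∫ x, fderiv ℝ f x v = 0 := by
  obtain ⟨C, hC⟩ := hf.lipschitzWith_of_hasCompactSupport hcs two_ne_zero
  have h := LipschitzWith.integral_lineDeriv_mul_eq (μ := volume)
    (LipschitzWith.const' (1:ℝ) (K := 0)) hC hcs (-v)
  have hl : ∀ x : EuclideanSpace ℝ (Fin n),
      lineDeriv ℝ (fun _ => (1:ℝ)) x (-v) = 0 := by
    intro x; simp [lineDeriv]
  simp only [hl, zero_mul, integral_zero, neg_neg, mul_one] at h
  have h2 : ∀ x, lineDeriv ℝ f x v = fderiv ℝ f x v := fun x =>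
    ((hf.differentiable two_ne_zero) x).lineDeriv_eq_fderiv
  simp only [h2] at h
  exact h.symm

/-- The pointwise divergence identity on all of space. -/
private lemma hardy_pointwise_sum {n : ℕ} {b μ : ℝ} (hb : 0 < b)
    {φ : EuclideanSpace ℝ (Fin n) → ℝ} (hφ : ContDiff ℝ 2 φ)
    (hsupp : tsupport φ ⊆ Metric.ball (0 : EuclideanSpace ℝ (Fin n)) (Real.sqrt b))
    (m : EuclideanSpace ℝ (Fin n)) :
    ∑ i : Fin n, fderiv ℝ
        (fun x : EuclideanSpace ℝ (Fin n) => (φ x ^ 2 * (b - ‖x‖ ^ 2) ^ (μ - 1)) * x i) m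
        (EuclideanSpace.single i 1)
      = 2 * φ m * (inner ℝ (gradient φ m) m : ℝ) * (b - ‖m‖ ^ 2) ^ (μ - 1)
        + (2 * (1 - μ)) * (φ m ^ 2 * ‖m‖ ^ 2 * (b - ‖m‖ ^ 2) ^ (μ - 2))
        + (n : ℝ) * (φ m ^ 2 * (b - ‖m‖ ^ 2) ^ (μ - 1)) := by
  by_cases hm : m ∈ Metric.ball (0 : EuclideanSpace ℝ (Fin n)) (Real.sqrt b)
  · have hr : 0 < b - ‖m‖ ^ 2 := hardy_rho_pos hb hm
    have hinner : HasFDerivAt (fun x : EuclideanSpace ℝ (Fin n) => (inner ℝ x x : ℝ))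
        ((fderivInnerCLM ℝ (m, m)).comp
          ((ContinuousLinearMap.id ℝ (EuclideanSpace ℝ (Fin n))).prod
            (ContinuousLinearMap.id ℝ (EuclideanSpace ℝ (Fin n))))) m :=
      (hasFDerivAt_id m).inner ℝ (hasFDerivAt_id m)
    set ρ' : EuclideanSpace ℝ (Fin n) →L[ℝ] ℝ := -((fderivInnerCLM ℝ (m, m)).comp
      ((ContinuousLinearMap.id ℝ (EuclideanSpace ℝ (Fin n))).prod
        (ContinuousLinearMap.id ℝ (EuclideanSpace ℝ (Fin n))))) with hρ'def
    have hρ : HasFDerivAt (fun x : EuclideanSpace ℝ (Fin n) => b - ‖x‖ ^ 2) ρ' m := by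
      have h2 : (fun x : EuclideanSpace ℝ (Fin n) => b - ‖x‖ ^ 2)
          = fun x : EuclideanSpace ℝ (Fin n) => b - (inner ℝ x x : ℝ) :=
        funext fun x => by rw [real_inner_self_eq_norm_sq]
      rw [h2]
      rw [hρ'def, ← zero_sub]
      exact (hasFDerivAt_const b m).sub hinner
    have hρval : ∀ w : EuclideanSpace ℝ (Fin n), ρ' w = -(2 * (inner ℝ m w : ℝ)) := by
      intro w
      simp only [hρ'def, ContinuousLinearMap.neg_apply, ContinuousLinearMap.comp_apply,
        ContinuousLinearMap.prod_apply, ContinuousLinearMap.coe_id', id, fderivInnerCLM_apply]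
      rw [real_inner_comm w m]; ring
    have hpow : HasFDerivAt (fun x : EuclideanSpace ℝ (Fin n) => (b - ‖x‖ ^ 2) ^ (μ - 1))
        (((μ - 1) * (b - ‖m‖ ^ 2) ^ (μ - 1 - 1)) • ρ') m := hρ.rpow_const (Or.inl hr.ne')
    have hφd : HasFDerivAt φ (fderiv ℝ φ m) m :=
      (hφ.differentiable two_ne_zero m).hasFDerivAt
    have hφ2d : HasFDerivAt (fun x => φ x ^ 2) ((2 * φ m) • fderiv ℝ φ m) m := by
      have h := hφd.mul hφd
      simp only [← pow_two] at h
      rw [mul_smul, two_smul]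
      exact h
    set G' : EuclideanSpace ℝ (Fin n) →L[ℝ] ℝ :=
      (φ m ^ 2) • (((μ - 1) * (b - ‖m‖ ^ 2) ^ (μ - 1 - 1)) • ρ')
        + ((b - ‖m‖ ^ 2) ^ (μ - 1)) • ((2 * φ m) • fderiv ℝ φ m) with hG'def
    have hG : HasFDerivAt
        (fun x : EuclideanSpace ℝ (Fin n) => φ x ^ 2 * (b - ‖x‖ ^ 2) ^ (μ - 1)) G' m :=
      hφ2d.mul hpow
    have hHi : ∀ i : Fin n, HasFDerivAt
        (fun x : EuclideanSpace ℝ (Fin n) => (φ x ^ 2 * (b - ‖x‖ ^ 2) ^ (μ - 1)) * x i)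
        ((φ m ^ 2 * (b - ‖m‖ ^ 2) ^ (μ - 1)) • (EuclideanSpace.proj (𝕜 := ℝ) i)
          + m i • G') m :=
      fun i => hG.mul ((EuclideanSpace.proj (𝕜 := ℝ) i).hasFDerivAt)
    have hstep : ∀ i : Fin n,
        fderiv ℝ (fun x : EuclideanSpace ℝ (Fin n) =>
            (φ x ^ 2 * (b - ‖x‖ ^ 2) ^ (μ - 1)) * x i) m (EuclideanSpace.single i 1)
        = (φ m ^ 2 * (b - ‖m‖ ^ 2) ^ (μ - 1)) + m i * G' (EuclideanSpace.single i 1) := by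
      intro i
      rw [(hHi i).fderiv]
      simp [EuclideanSpace.single_apply]
    rw [Finset.sum_congr rfl fun i _ => hstep i, Finset.sum_add_distrib, Finset.sum_const]
    have hsum2 : ∑ i : Fin n, m i * G' (EuclideanSpace.single i (1:ℝ)) = G' m := by
      calc ∑ i : Fin n, m i * G' (EuclideanSpace.single i (1:ℝ))
          = ∑ i : Fin n, G' (m i • EuclideanSpace.single i (1:ℝ)) := by
            simp [_root_.map_smul]
        _ = G' (∑ i : Fin n, m i • EuclideanSpace.single i (1:ℝ)) := (map_sum G' _ _).symm
        _ = G' m := by rw [hardy_sum_single_smul]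
    rw [hsum2]
    have hgrad : (inner ℝ (gradient φ m) m : ℝ) = fderiv ℝ φ m m := by
      simp [gradient, InnerProductSpace.toDual_symm_apply]
    have hμ2 : μ - 1 - 1 = μ - 2 := by ring
    simp only [hG'def, ContinuousLinearMap.add_apply, ContinuousLinearMap.smul_apply,
      hρval m, real_inner_self_eq_norm_sq, smul_eq_mul, hgrad, hμ2, Finset.card_univ,
      Fintype.card_fin, nsmul_eq_mul]
    ring
  · have hm' : m ∉ tsupport φ := fun h => hm (hsupp h)
    have hφ0 : φ m = 0 := image_eq_zero_of_notMem_tsupport hm'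
    have h0 : ∀ i : Fin n,
        fderiv ℝ (fun x : EuclideanSpace ℝ (Fin n) =>
          (φ x ^ 2 * (b - ‖x‖ ^ 2) ^ (μ - 1)) * x i) m = 0 := by
      intro i
      have hopen : IsOpen (tsupport φ)ᶜ := (isClosed_tsupport φ).isOpen_compl
      have hev : (fun x : EuclideanSpace ℝ (Fin n) =>
          (φ x ^ 2 * (b - ‖x‖ ^ 2) ^ (μ - 1)) * x i)
          =ᶠ[nhds m] (fun _ => (0:ℝ)) := by
        filter_upwards [hopen.mem_nhds hm'] with y hy
        simp [image_eq_zero_of_notMem_tsupport hy]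
      rw [hev.fderiv_eq]
      exact fderiv_const_apply 0
    simp [h0, hφ0]

set_option maxHeartbeats 1000000 in
/-- Hardy-type embedding `H̊¹_μ(B) ↪ L²_{μ−2}(B)` for `μ < 1`, stated on the dense
subspace `C_c^∞(B)`: there is a constant `C > 0` depending only on `n`, `b`, `μ` such
that `∫_B φ² ρ^{μ−2} ≤ C ∫_B (‖∇φ‖² + φ²) ρ^μ` for all smooth `φ` compactly supported
in the ball `B = B(0, √b)`, where `ρ(m) = b − ‖m‖²`. -/
theorem weighted_embedding_compact_support
    (n : ℕ) (hn : 1 ≤ n) (b : ℝ) (hb : 0 < b) (μ : ℝ) (hμ : μ < 1) :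
    ∃ C : ℝ, 0 < C ∧
      ∀ φ : EuclideanSpace ℝ (Fin n) → ℝ,
        ContDiff ℝ (⊤ : ℕ∞) φ → HasCompactSupport φ →
        tsupport φ ⊆ Metric.ball (0 : EuclideanSpace ℝ (Fin n)) (Real.sqrt b) →
        (∫ m in Metric.ball (0 : EuclideanSpace ℝ (Fin n)) (Real.sqrt b),
            φ m ^ 2 * (b - ‖m‖ ^ 2) ^ (μ - 2))
          ≤ C * ∫ m in Metric.ball (0 : EuclideanSpace ℝ (Fin n)) (Real.sqrt b),
              (‖gradient φ m‖ ^ 2 + φ m ^ 2) * (b - ‖m‖ ^ 2) ^ μ := by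
  have hε : (0:ℝ) < 1 - μ := by linarith
  refine ⟨4 / b ^ 2 + 2 / b * (1 / (1 - μ)) ^ 2, by positivity, ?_⟩
  intro φ hφ' hφc hsupp
  have hφ : ContDiff ℝ 2 φ := hφ'.of_le (WithTop.coe_le_coe.mpr le_top)
  have hS : IsCompact (tsupport φ) := hφc
  have hφ0 : ∀ m, m ∉ tsupport φ → φ m = 0 := fun m hm => image_eq_zero_of_notMem_tsupport hm
  have hgrad0 : ∀ m, m ∉ tsupport φ → gradient φ m = 0 := by
    intro m hm
    have hf : fderiv ℝ φ m = 0 := by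
      by_contra h
      exact hm (support_fderiv_subset ℝ (Function.mem_support.2 h))
    simp [gradient, hf]
  have hgradc : Continuous fun m => gradient φ m :=
    ((toDual ℝ (EuclideanSpace ℝ (Fin n))).symm.continuous).comp
      (hφ.continuous_fderiv two_ne_zero)
  -- good integrand instances
  have g1 := hardy_good hb hS hsupp (fun m => φ m ^ 2) (hφ.continuous.pow 2)
    (fun m hm => by simp [hφ0 m hm]) (μ - 2)
  have g3 := hardy_good hb hS hsupp
    (fun m => 2 * φ m * (inner ℝ (gradient φ m) m : ℝ))
    ((continuous_const.mul hφ.continuous).mul (hgradc.inner continuous_id))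
    (fun m hm => by simp [hφ0 m hm]) (μ - 1)
  have g4 := hardy_good hb hS hsupp (fun m => φ m ^ 2 * ‖m‖ ^ 2)
    ((hφ.continuous.pow 2).mul (continuous_norm.pow 2))
    (fun m hm => by simp [hφ0 m hm]) (μ - 2)
  have g5 := hardy_good hb hS hsupp (fun m => φ m ^ 2) (hφ.continuous.pow 2)
    (fun m hm => by simp [hφ0 m hm]) (μ - 1)
  have g6 := hardy_good hb hS hsupp (fun m => 2 * |φ m| * ‖gradient φ m‖ * ‖m‖)
    (((continuous_const.mul hφ.continuous.abs).mul hgradc.norm).mul continuous_norm)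
    (fun m hm => by simp [hφ0 m hm]) (μ - 1)
  have g7 := hardy_good hb hS hsupp (fun m => ‖gradient φ m‖ ^ 2) (hgradc.norm.pow 2)
    (fun m hm => by simp [hgrad0 m hm]) μ
  have g8 := hardy_good hb hS hsupp (fun m => φ m ^ 2) (hφ.continuous.pow 2)
    (fun m hm => by simp [hφ0 m hm]) μ
  -- divergence identity
  have hGc : ContDiff ℝ 2
      (fun x : EuclideanSpace ℝ (Fin n) => φ x ^ 2 * (b - ‖x‖ ^ 2) ^ (μ - 1)) := by
    rw [contDiff_iff_contDiffAt]
    intro x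
    by_cases hx : x ∈ Metric.ball (0 : EuclideanSpace ℝ (Fin n)) (Real.sqrt b)
    · exact (hφ.contDiffAt.pow 2).mul
        (((contDiff_const.sub (contDiff_norm_sq (𝕜 := ℝ))).contDiffAt).rpow_const_of_ne
          (hardy_rho_pos hb hx).ne')
    · have hxS : x ∉ tsupport φ := fun h => hx (hsupp h)
      have hev : (fun x : EuclideanSpace ℝ (Fin n) => φ x ^ 2 * (b - ‖x‖ ^ 2) ^ (μ - 1))
          =ᶠ[nhds x] fun _ => (0:ℝ) := by
        filter_upwards [(isClosed_tsupport φ).isOpen_compl.mem_nhds hxS] with y hy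
        simp [hφ0 y hy]
      exact (contDiffAt_const (c := (0:ℝ))).congr_of_eventuallyEq hev
  have hfi : ∀ i : Fin n, ContDiff ℝ 2
      (fun x : EuclideanSpace ℝ (Fin n) => (φ x ^ 2 * (b - ‖x‖ ^ 2) ^ (μ - 1)) * x i) :=
    fun i => hGc.mul (EuclideanSpace.proj (𝕜 := ℝ) i).contDiff
  have hfics : ∀ i : Fin n, HasCompactSupport
      (fun x : EuclideanSpace ℝ (Fin n) => (φ x ^ 2 * (b - ‖x‖ ^ 2) ^ (μ - 1)) * x i) :=
    fun i => HasCompactSupport.intro hS fun x hx => by simp [hφ0 x hx]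
  have hDint : ∫ m : EuclideanSpace ℝ (Fin n),
      (2 * φ m * (inner ℝ (gradient φ m) m : ℝ) * (b - ‖m‖ ^ 2) ^ (μ - 1)
        + (2 * (1 - μ)) * (φ m ^ 2 * ‖m‖ ^ 2 * (b - ‖m‖ ^ 2) ^ (μ - 2))
        + (n : ℝ) * (φ m ^ 2 * (b - ‖m‖ ^ 2) ^ (μ - 1))) = 0 := by
    have heq : ∀ m : EuclideanSpace ℝ (Fin n),
        (2 * φ m * (inner ℝ (gradient φ m) m : ℝ) * (b - ‖m‖ ^ 2) ^ (μ - 1)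
          + (2 * (1 - μ)) * (φ m ^ 2 * ‖m‖ ^ 2 * (b - ‖m‖ ^ 2) ^ (μ - 2))
          + (n : ℝ) * (φ m ^ 2 * (b - ‖m‖ ^ 2) ^ (μ - 1)))
        = ∑ i : Fin n, fderiv ℝ
            (fun x : EuclideanSpace ℝ (Fin n) =>
              (φ x ^ 2 * (b - ‖x‖ ^ 2) ^ (μ - 1)) * x i) m (EuclideanSpace.single i 1) :=
      fun m => (hardy_pointwise_sum hb hφ hsupp m).symm
    rw [integral_congr_ae (Filter.Eventually.of_forall heq)]
    have hint : ∀ i : Fin n, Integrable (fun m : EuclideanSpace ℝ (Fin n) =>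
        fderiv ℝ (fun x : EuclideanSpace ℝ (Fin n) =>
          (φ x ^ 2 * (b - ‖x‖ ^ 2) ^ (μ - 1)) * x i) m (EuclideanSpace.single i 1)) := by
      intro i
      have hts : tsupport (fun x : EuclideanSpace ℝ (Fin n) =>
          (φ x ^ 2 * (b - ‖x‖ ^ 2) ^ (μ - 1)) * x i) ⊆ tsupport φ := by
        apply closure_minimal _ (isClosed_tsupport φ)
        intro x hx
        by_contra hxs
        exact hx (by simp [hφ0 x hxs])
      have hzero : ∀ m, m ∉ tsupport φ →
          fderiv ℝ (fun x : EuclideanSpace ℝ (Fin n) =>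
            (φ x ^ 2 * (b - ‖x‖ ^ 2) ^ (μ - 1)) * x i) m (EuclideanSpace.single i 1) = 0 := by
        intro m hm
        have h0 : fderiv ℝ (fun x : EuclideanSpace ℝ (Fin n) =>
            (φ x ^ 2 * (b - ‖x‖ ^ 2) ^ (μ - 1)) * x i) m = 0 := by
          by_contra h
          exact hm (hts (support_fderiv_subset ℝ (Function.mem_support.2 h)))
        simp [h0]
      have hcont : Continuous (fun m : EuclideanSpace ℝ (Fin n) =>
          fderiv ℝ (fun x : EuclideanSpace ℝ (Fin n) =>
            (φ x ^ 2 * (b - ‖x‖ ^ 2) ^ (μ - 1)) * x i) m (EuclideanSpace.single i 1)) :=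
        ((hfi i).continuous_fderiv two_ne_zero).clm_apply continuous_const
      exact hcont.integrable_of_hasCompactSupport
        (HasCompactSupport.intro hS hzero)
    rw [integral_finset_sum _ fun i _ => hint i]
    simp [fun i => hardy_ibp _ (hfi i) (hfics i) (EuclideanSpace.single i 1)]
    -- split the divergence integral into three pieces, back on the ball
  have hT2i := g4.1.const_mul (2 * (1 - μ))
  have hT3i := g5.1.const_mul (n : ℝ)
  have e1 : (∫ m : EuclideanSpace ℝ (Fin n),
      (2 * φ m * (inner ℝ (gradient φ m) m : ℝ) * (b - ‖m‖ ^ 2) ^ (μ - 1)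
        + (2 * (1 - μ)) * (φ m ^ 2 * ‖m‖ ^ 2 * (b - ‖m‖ ^ 2) ^ (μ - 2))
        + (n : ℝ) * (φ m ^ 2 * (b - ‖m‖ ^ 2) ^ (μ - 1))))
      = (∫ m : EuclideanSpace ℝ (Fin n),
          (2 * φ m * (inner ℝ (gradient φ m) m : ℝ) * (b - ‖m‖ ^ 2) ^ (μ - 1)
            + (2 * (1 - μ)) * (φ m ^ 2 * ‖m‖ ^ 2 * (b - ‖m‖ ^ 2) ^ (μ - 2))))
        + ∫ m : EuclideanSpace ℝ (Fin n), (n : ℝ) * (φ m ^ 2 * (b - ‖m‖ ^ 2) ^ (μ - 1)) :=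
    integral_add (g3.1.add hT2i) hT3i
  have e2 : (∫ m : EuclideanSpace ℝ (Fin n),
      (2 * φ m * (inner ℝ (gradient φ m) m : ℝ) * (b - ‖m‖ ^ 2) ^ (μ - 1)
        + (2 * (1 - μ)) * (φ m ^ 2 * ‖m‖ ^ 2 * (b - ‖m‖ ^ 2) ^ (μ - 2))))
      = (∫ m : EuclideanSpace ℝ (Fin n),
          2 * φ m * (inner ℝ (gradient φ m) m : ℝ) * (b - ‖m‖ ^ 2) ^ (μ - 1))
        + ∫ m : EuclideanSpace ℝ (Fin n),
            (2 * (1 - μ)) * (φ m ^ 2 * ‖m‖ ^ 2 * (b - ‖m‖ ^ 2) ^ (μ - 2)) :=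
    integral_add g3.1 hT2i
  have e3 : (∫ m : EuclideanSpace ℝ (Fin n),
      (2 * (1 - μ)) * (φ m ^ 2 * ‖m‖ ^ 2 * (b - ‖m‖ ^ 2) ^ (μ - 2)))
      = (2 * (1 - μ)) * ∫ m : EuclideanSpace ℝ (Fin n),
          φ m ^ 2 * ‖m‖ ^ 2 * (b - ‖m‖ ^ 2) ^ (μ - 2) := integral_const_mul _ _
  have e4 : (∫ m : EuclideanSpace ℝ (Fin n),
      (n : ℝ) * (φ m ^ 2 * (b - ‖m‖ ^ 2) ^ (μ - 1)))
      = (n : ℝ) * ∫ m : EuclideanSpace ℝ (Fin n),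
          φ m ^ 2 * (b - ‖m‖ ^ 2) ^ (μ - 1) := integral_const_mul _ _
  rw [e1, e2, e3, e4, ← g3.2, ← g4.2, ← g5.2] at hDint
  -- nonnegativity
  have hQpos : 0 ≤ ∫ m in Metric.ball (0 : EuclideanSpace ℝ (Fin n)) (Real.sqrt b),
      φ m ^ 2 * (b - ‖m‖ ^ 2) ^ (μ - 1) :=
    setIntegral_nonneg measurableSet_ball fun m hm =>
      mul_nonneg (sq_nonneg _) (Real.rpow_nonneg (hardy_rho_pos hb hm).le _)
  have hRgpos : 0 ≤ ∫ m in Metric.ball (0 : EuclideanSpace ℝ (Fin n)) (Real.sqrt b),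
      ‖gradient φ m‖ ^ 2 * (b - ‖m‖ ^ 2) ^ μ :=
    setIntegral_nonneg measurableSet_ball fun m hm =>
      mul_nonneg (sq_nonneg _) (Real.rpow_nonneg (hardy_rho_pos hb hm).le _)
  have hRfpos : 0 ≤ ∫ m in Metric.ball (0 : EuclideanSpace ℝ (Fin n)) (Real.sqrt b),
      φ m ^ 2 * (b - ‖m‖ ^ 2) ^ μ :=
    setIntegral_nonneg measurableSet_ball fun m hm =>
      mul_nonneg (sq_nonneg _) (Real.rpow_nonneg (hardy_rho_pos hb hm).le _)
  -- Cauchy-Schwarz majorization of the cross term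
  have habs : -(∫ m in Metric.ball (0 : EuclideanSpace ℝ (Fin n)) (Real.sqrt b),
        2 * φ m * (inner ℝ (gradient φ m) m : ℝ) * (b - ‖m‖ ^ 2) ^ (μ - 1))
      ≤ ∫ m in Metric.ball (0 : EuclideanSpace ℝ (Fin n)) (Real.sqrt b),
        2 * |φ m| * ‖gradient φ m‖ * ‖m‖ * (b - ‖m‖ ^ 2) ^ (μ - 1) := by
    have h2 : |∫ m in Metric.ball (0 : EuclideanSpace ℝ (Fin n)) (Real.sqrt b),
        2 * φ m * (inner ℝ (gradient φ m) m : ℝ) * (b - ‖m‖ ^ 2) ^ (μ - 1)|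
        ≤ ∫ m in Metric.ball (0 : EuclideanSpace ℝ (Fin n)) (Real.sqrt b),
          |2 * φ m * (inner ℝ (gradient φ m) m : ℝ) * (b - ‖m‖ ^ 2) ^ (μ - 1)| := by
      exact norm_integral_le_integral_norm
        (μ := volume.restrict (Metric.ball (0 : EuclideanSpace ℝ (Fin n)) (Real.sqrt b)))
        (f := fun m : EuclideanSpace ℝ (Fin n) =>
          2 * φ m * (inner ℝ (gradient φ m) m : ℝ) * (b - ‖m‖ ^ 2) ^ (μ - 1))
    have h3 : (∫ m in Metric.ball (0 : EuclideanSpace ℝ (Fin n)) (Real.sqrt b),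
          |2 * φ m * (inner ℝ (gradient φ m) m : ℝ) * (b - ‖m‖ ^ 2) ^ (μ - 1)|)
        ≤ ∫ m in Metric.ball (0 : EuclideanSpace ℝ (Fin n)) (Real.sqrt b),
          2 * |φ m| * ‖gradient φ m‖ * ‖m‖ * (b - ‖m‖ ^ 2) ^ (μ - 1) := by
      apply setIntegral_mono_on g3.1.abs.integrableOn g6.1.integrableOn measurableSet_ball
      intro m hm
      have hrnn : 0 ≤ (b - ‖m‖ ^ 2) ^ (μ - 1) := Real.rpow_nonneg (hardy_rho_pos hb hm).le _
      have hcs2 : |(inner ℝ (gradient φ m) m : ℝ)| ≤ ‖gradient φ m‖ * ‖m‖ :=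
        abs_real_inner_le_norm _ _
      calc |2 * φ m * (inner ℝ (gradient φ m) m : ℝ) * (b - ‖m‖ ^ 2) ^ (μ - 1)|
          = |2 * φ m * (inner ℝ (gradient φ m) m : ℝ)| * (b - ‖m‖ ^ 2) ^ (μ - 1) := by
            rw [abs_mul, abs_of_nonneg hrnn]
        _ ≤ (2 * |φ m| * (‖gradient φ m‖ * ‖m‖)) * (b - ‖m‖ ^ 2) ^ (μ - 1) := by
            apply mul_le_mul_of_nonneg_right _ hrnn
            rw [abs_mul, abs_mul, abs_two]
            gcongr
        _ = 2 * |φ m| * ‖gradient φ m‖ * ‖m‖ * (b - ‖m‖ ^ 2) ^ (μ - 1) := by ring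
    linarith [neg_le_abs (∫ m in Metric.ball (0 : EuclideanSpace ℝ (Fin n)) (Real.sqrt b),
      2 * φ m * (inner ℝ (gradient φ m) m : ℝ) * (b - ‖m‖ ^ 2) ^ (μ - 1))]
  -- AM-GM bound
  have hMbound : (∫ m in Metric.ball (0 : EuclideanSpace ℝ (Fin n)) (Real.sqrt b),
        2 * |φ m| * ‖gradient φ m‖ * ‖m‖ * (b - ‖m‖ ^ 2) ^ (μ - 1))
      ≤ (1 - μ) * (∫ m in Metric.ball (0 : EuclideanSpace ℝ (Fin n)) (Real.sqrt b),
            φ m ^ 2 * ‖m‖ ^ 2 * (b - ‖m‖ ^ 2) ^ (μ - 2))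
        + (1 / (1 - μ)) * ∫ m in Metric.ball (0 : EuclideanSpace ℝ (Fin n)) (Real.sqrt b),
            ‖gradient φ m‖ ^ 2 * (b - ‖m‖ ^ 2) ^ μ := by
    have hmono : (∫ m in Metric.ball (0 : EuclideanSpace ℝ (Fin n)) (Real.sqrt b),
          2 * |φ m| * ‖gradient φ m‖ * ‖m‖ * (b - ‖m‖ ^ 2) ^ (μ - 1))
        ≤ ∫ m in Metric.ball (0 : EuclideanSpace ℝ (Fin n)) (Real.sqrt b),
          ((1 - μ) * (φ m ^ 2 * ‖m‖ ^ 2 * (b - ‖m‖ ^ 2) ^ (μ - 2))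
            + (1 / (1 - μ)) * (‖gradient φ m‖ ^ 2 * (b - ‖m‖ ^ 2) ^ μ)) := by
      apply setIntegral_mono_on g6.1.integrableOn
        ((g4.1.const_mul (1 - μ)).add (g7.1.const_mul (1 / (1 - μ)))).integrableOn
        measurableSet_ball
      intro m hm
      have hr : 0 < b - ‖m‖ ^ 2 := hardy_rho_pos hb hm
      have e1 : (b - ‖m‖ ^ 2) ^ ((μ - 2) / 2) * (b - ‖m‖ ^ 2) ^ (μ / 2)
          = (b - ‖m‖ ^ 2) ^ (μ - 1) := by rw [← Real.rpow_add hr]; ring_nf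
      have e2 : (b - ‖m‖ ^ 2) ^ ((μ - 2) / 2) * (b - ‖m‖ ^ 2) ^ ((μ - 2) / 2)
          = (b - ‖m‖ ^ 2) ^ (μ - 2) := by rw [← Real.rpow_add hr]; ring_nf
      have e3 : (b - ‖m‖ ^ 2) ^ (μ / 2) * (b - ‖m‖ ^ 2) ^ (μ / 2)
          = (b - ‖m‖ ^ 2) ^ μ := by rw [← Real.rpow_add hr]; ring_nf
      have key := hardy_amgm (ε := 1 - μ)
        (u := |φ m| * ‖m‖ * (b - ‖m‖ ^ 2) ^ ((μ - 2) / 2))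
        (v := ‖gradient φ m‖ * (b - ‖m‖ ^ 2) ^ (μ / 2)) hε
      have h1 : 2 * ((|φ m| * ‖m‖ * (b - ‖m‖ ^ 2) ^ ((μ - 2) / 2))
            * (‖gradient φ m‖ * (b - ‖m‖ ^ 2) ^ (μ / 2)))
          = 2 * |φ m| * ‖gradient φ m‖ * ‖m‖ * (b - ‖m‖ ^ 2) ^ (μ - 1) := by
        rw [← e1]; ring
      have h2 : (1 - μ) * (|φ m| * ‖m‖ * (b - ‖m‖ ^ 2) ^ ((μ - 2) / 2)) ^ 2
          = (1 - μ) * (φ m ^ 2 * ‖m‖ ^ 2 * (b - ‖m‖ ^ 2) ^ (μ - 2)) := by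
        rw [← e2, ← sq_abs (φ m)]; ring
      have h3 : (‖gradient φ m‖ * (b - ‖m‖ ^ 2) ^ (μ / 2)) ^ 2 / (1 - μ)
          = (1 / (1 - μ)) * (‖gradient φ m‖ ^ 2 * (b - ‖m‖ ^ 2) ^ μ) := by
        rw [← e3, one_div]; ring
      rw [h1, h2, h3] at key
      exact key
    have hsplit2 : (∫ m in Metric.ball (0 : EuclideanSpace ℝ (Fin n)) (Real.sqrt b),
          ((1 - μ) * (φ m ^ 2 * ‖m‖ ^ 2 * (b - ‖m‖ ^ 2) ^ (μ - 2))
            + (1 / (1 - μ)) * (‖gradient φ m‖ ^ 2 * (b - ‖m‖ ^ 2) ^ μ)))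
        = (1 - μ) * (∫ m in Metric.ball (0 : EuclideanSpace ℝ (Fin n)) (Real.sqrt b),
              φ m ^ 2 * ‖m‖ ^ 2 * (b - ‖m‖ ^ 2) ^ (μ - 2))
          + (1 / (1 - μ)) * ∫ m in Metric.ball (0 : EuclideanSpace ℝ (Fin n)) (Real.sqrt b),
              ‖gradient φ m‖ ^ 2 * (b - ‖m‖ ^ 2) ^ μ := by
      rw [integral_add (g4.1.const_mul (1 - μ)).integrableOn
        (g7.1.const_mul (1 / (1 - μ))).integrableOn, integral_const_mul, integral_const_mul]
    linarith
  -- Hardy bound on A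
  have hA2 : (∫ m in Metric.ball (0 : EuclideanSpace ℝ (Fin n)) (Real.sqrt b),
        φ m ^ 2 * ‖m‖ ^ 2 * (b - ‖m‖ ^ 2) ^ (μ - 2))
      ≤ (1 / (1 - μ)) ^ 2 * ∫ m in Metric.ball (0 : EuclideanSpace ℝ (Fin n)) (Real.sqrt b),
          ‖gradient φ m‖ ^ 2 * (b - ‖m‖ ^ 2) ^ μ := by
    have hnq : 0 ≤ (n : ℝ) * ∫ m in Metric.ball (0 : EuclideanSpace ℝ (Fin n)) (Real.sqrt b),
        φ m ^ 2 * (b - ‖m‖ ^ 2) ^ (μ - 1) := mul_nonneg (Nat.cast_nonneg n) hQpos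
    have h' : (1 - μ) * (∫ m in Metric.ball (0 : EuclideanSpace ℝ (Fin n)) (Real.sqrt b),
          φ m ^ 2 * ‖m‖ ^ 2 * (b - ‖m‖ ^ 2) ^ (μ - 2))
        ≤ (1 / (1 - μ)) * ∫ m in Metric.ball (0 : EuclideanSpace ℝ (Fin n)) (Real.sqrt b),
            ‖gradient φ m‖ ^ 2 * (b - ‖m‖ ^ 2) ^ μ := by linarith
    have hei : (1 / (1 - μ)) * ((1 - μ) * (∫ m in
          Metric.ball (0 : EuclideanSpace ℝ (Fin n)) (Real.sqrt b),
          φ m ^ 2 * ‖m‖ ^ 2 * (b - ‖m‖ ^ 2) ^ (μ - 2)))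
        = ∫ m in Metric.ball (0 : EuclideanSpace ℝ (Fin n)) (Real.sqrt b),
            φ m ^ 2 * ‖m‖ ^ 2 * (b - ‖m‖ ^ 2) ^ (μ - 2) := by
      field_simp
    have h5 := mul_le_mul_of_nonneg_left h' (by positivity : (0:ℝ) ≤ 1 / (1 - μ))
    calc (∫ m in Metric.ball (0 : EuclideanSpace ℝ (Fin n)) (Real.sqrt b),
          φ m ^ 2 * ‖m‖ ^ 2 * (b - ‖m‖ ^ 2) ^ (μ - 2))
        = (1 / (1 - μ)) * ((1 - μ) * (∫ m in
            Metric.ball (0 : EuclideanSpace ℝ (Fin n)) (Real.sqrt b),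
            φ m ^ 2 * ‖m‖ ^ 2 * (b - ‖m‖ ^ 2) ^ (μ - 2))) := hei.symm
      _ ≤ (1 / (1 - μ)) * ((1 / (1 - μ)) * ∫ m in
            Metric.ball (0 : EuclideanSpace ℝ (Fin n)) (Real.sqrt b),
            ‖gradient φ m‖ ^ 2 * (b - ‖m‖ ^ 2) ^ μ) := h5
      _ = (1 / (1 - μ)) ^ 2 * ∫ m in
            Metric.ball (0 : EuclideanSpace ℝ (Fin n)) (Real.sqrt b),
            ‖gradient φ m‖ ^ 2 * (b - ‖m‖ ^ 2) ^ μ := by ring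
  -- final pointwise bound
  have hfinal : (∫ m in Metric.ball (0 : EuclideanSpace ℝ (Fin n)) (Real.sqrt b),
        φ m ^ 2 * (b - ‖m‖ ^ 2) ^ (μ - 2))
      ≤ (4 / b ^ 2) * (∫ m in Metric.ball (0 : EuclideanSpace ℝ (Fin n)) (Real.sqrt b),
            φ m ^ 2 * (b - ‖m‖ ^ 2) ^ μ)
        + (2 / b) * ∫ m in Metric.ball (0 : EuclideanSpace ℝ (Fin n)) (Real.sqrt b),
            φ m ^ 2 * ‖m‖ ^ 2 * (b - ‖m‖ ^ 2) ^ (μ - 2) := by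
    have hmono : (∫ m in Metric.ball (0 : EuclideanSpace ℝ (Fin n)) (Real.sqrt b),
          φ m ^ 2 * (b - ‖m‖ ^ 2) ^ (μ - 2))
        ≤ ∫ m in Metric.ball (0 : EuclideanSpace ℝ (Fin n)) (Real.sqrt b),
          ((4 / b ^ 2) * (φ m ^ 2 * (b - ‖m‖ ^ 2) ^ μ)
            + (2 / b) * (φ m ^ 2 * ‖m‖ ^ 2 * (b - ‖m‖ ^ 2) ^ (μ - 2))) := by
      apply setIntegral_mono_on g1.1.integrableOn
        ((g8.1.const_mul (4 / b ^ 2)).add (g4.1.const_mul (2 / b))).integrableOn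
        measurableSet_ball
      intro m hm
      simp only [Pi.add_apply]
      have hr : 0 < b - ‖m‖ ^ 2 := hardy_rho_pos hb hm
      rcases le_or_gt (b / 2) (b - ‖m‖ ^ 2) with hc | hc
      · have hA0 : 0 ≤ (2 / b) * (φ m ^ 2 * ‖m‖ ^ 2 * (b - ‖m‖ ^ 2) ^ (μ - 2)) :=
          mul_nonneg (by positivity)
            (mul_nonneg (mul_nonneg (sq_nonneg _) (sq_nonneg _))
              (Real.rpow_nonneg hr.le _))
        have hsplitr : (b - ‖m‖ ^ 2) ^ (μ - 2)
            = (b - ‖m‖ ^ 2) ^ μ * ((b - ‖m‖ ^ 2) ^ 2)⁻¹ := by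
          rw [← Real.rpow_natCast (b - ‖m‖ ^ 2) 2, ← Real.rpow_neg hr.le,
            ← Real.rpow_add hr]
          congr 1
        have h1 : (b / 2) ^ 2 ≤ (b - ‖m‖ ^ 2) ^ 2 := by nlinarith
        have h2 : ((b - ‖m‖ ^ 2) ^ 2)⁻¹ ≤ ((b / 2) ^ 2)⁻¹ :=
          inv_anti₀ (by positivity) h1
        have h3 : ((b / 2) ^ 2)⁻¹ = 4 / b ^ 2 := by
          rw [show ((b:ℝ) / 2) ^ 2 = b ^ 2 / 4 by ring, inv_div]
        have hkey : φ m ^ 2 * (b - ‖m‖ ^ 2) ^ (μ - 2)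
            ≤ (4 / b ^ 2) * (φ m ^ 2 * (b - ‖m‖ ^ 2) ^ μ) := by
          calc φ m ^ 2 * (b - ‖m‖ ^ 2) ^ (μ - 2)
              = (φ m ^ 2 * (b - ‖m‖ ^ 2) ^ μ) * ((b - ‖m‖ ^ 2) ^ 2)⁻¹ := by
                rw [hsplitr]; ring
            _ ≤ (φ m ^ 2 * (b - ‖m‖ ^ 2) ^ μ) * (4 / b ^ 2) := by
                apply mul_le_mul_of_nonneg_left (h3 ▸ h2)
                  (mul_nonneg (sq_nonneg _) (Real.rpow_nonneg hr.le _))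
            _ = (4 / b ^ 2) * (φ m ^ 2 * (b - ‖m‖ ^ 2) ^ μ) := by ring
        linarith
      · have h1 : (1:ℝ) ≤ 2 / b * ‖m‖ ^ 2 := by
          rw [div_mul_eq_mul_div, le_div_iff₀ hb]; linarith
        have h0 : 0 ≤ φ m ^ 2 * (b - ‖m‖ ^ 2) ^ (μ - 2) :=
          mul_nonneg (sq_nonneg _) (Real.rpow_nonneg hr.le _)
        have h2 : φ m ^ 2 * (b - ‖m‖ ^ 2) ^ (μ - 2)
            ≤ (2 / b * ‖m‖ ^ 2) * (φ m ^ 2 * (b - ‖m‖ ^ 2) ^ (μ - 2)) :=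
          le_mul_of_one_le_left h0 h1
        have h3 : (2 / b * ‖m‖ ^ 2) * (φ m ^ 2 * (b - ‖m‖ ^ 2) ^ (μ - 2))
            = (2 / b) * (φ m ^ 2 * ‖m‖ ^ 2 * (b - ‖m‖ ^ 2) ^ (μ - 2)) := by ring
        have h4 : 0 ≤ (4 / b ^ 2) * (φ m ^ 2 * (b - ‖m‖ ^ 2) ^ μ) :=
          mul_nonneg (by positivity) (mul_nonneg (sq_nonneg _) (Real.rpow_nonneg hr.le _))
        linarith
    have hfsplit : (∫ m in Metric.ball (0 : EuclideanSpace ℝ (Fin n)) (Real.sqrt b),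
          ((4 / b ^ 2) * (φ m ^ 2 * (b - ‖m‖ ^ 2) ^ μ)
            + (2 / b) * (φ m ^ 2 * ‖m‖ ^ 2 * (b - ‖m‖ ^ 2) ^ (μ - 2))))
        = (4 / b ^ 2) * (∫ m in Metric.ball (0 : EuclideanSpace ℝ (Fin n)) (Real.sqrt b),
              φ m ^ 2 * (b - ‖m‖ ^ 2) ^ μ)
          + (2 / b) * ∫ m in Metric.ball (0 : EuclideanSpace ℝ (Fin n)) (Real.sqrt b),
              φ m ^ 2 * ‖m‖ ^ 2 * (b - ‖m‖ ^ 2) ^ (μ - 2) := by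
      rw [integral_add (g8.1.const_mul (4 / b ^ 2)).integrableOn
        (g4.1.const_mul (2 / b)).integrableOn, integral_const_mul, integral_const_mul]
    linarith [le_of_le_of_eq hmono hfsplit]
  -- RHS split
  have hRHS : (∫ m in Metric.ball (0 : EuclideanSpace ℝ (Fin n)) (Real.sqrt b),
        (‖gradient φ m‖ ^ 2 + φ m ^ 2) * (b - ‖m‖ ^ 2) ^ μ)
      = (∫ m in Metric.ball (0 : EuclideanSpace ℝ (Fin n)) (Real.sqrt b),
            ‖gradient φ m‖ ^ 2 * (b - ‖m‖ ^ 2) ^ μ)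
        + ∫ m in Metric.ball (0 : EuclideanSpace ℝ (Fin n)) (Real.sqrt b),
            φ m ^ 2 * (b - ‖m‖ ^ 2) ^ μ := by
    rw [show (fun m : EuclideanSpace ℝ (Fin n) =>
        (‖gradient φ m‖ ^ 2 + φ m ^ 2) * (b - ‖m‖ ^ 2) ^ μ)
      = fun m : EuclideanSpace ℝ (Fin n) =>
        ‖gradient φ m‖ ^ 2 * (b - ‖m‖ ^ 2) ^ μ + φ m ^ 2 * (b - ‖m‖ ^ 2) ^ μ from
      funext fun m => by ring]
    exact integral_add g7.1.integrableOn g8.1.integrableOn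
  -- conclusion
  rw [hRHS]
  have c1 : 0 ≤ (4 / b ^ 2) * ∫ m in Metric.ball (0 : EuclideanSpace ℝ (Fin n)) (Real.sqrt b),
      ‖gradient φ m‖ ^ 2 * (b - ‖m‖ ^ 2) ^ μ := mul_nonneg (by positivity) hRgpos
  have c2 : 0 ≤ (2 / b * (1 / (1 - μ)) ^ 2) * ∫ m in
      Metric.ball (0 : EuclideanSpace ℝ (Fin n)) (Real.sqrt b),
      φ m ^ 2 * (b - ‖m‖ ^ 2) ^ μ := mul_nonneg (by positivity) hRfpos
  have c3 : (2 / b) * (∫ m in Metric.ball (0 : EuclideanSpace ℝ (Fin n)) (Real.sqrt b),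
        φ m ^ 2 * ‖m‖ ^ 2 * (b - ‖m‖ ^ 2) ^ (μ - 2))
      ≤ (2 / b) * ((1 / (1 - μ)) ^ 2 * ∫ m in
          Metric.ball (0 : EuclideanSpace ℝ (Fin n)) (Real.sqrt b),
          ‖gradient φ m‖ ^ 2 * (b - ‖m‖ ^ 2) ^ μ) :=
    mul_le_mul_of_nonneg_left hA2 (by positivity)
  nlinarith [hfinal, c1, c2, c3]
end

section
/- Let f : B → ℝ be measurable and let r₀ ∈ (0, √b). Suppose ∫_{B_{r₀}} f(m)² dm < ∞ and for almost every r ∈ (r₀, √b) one has ∫_{∂B_r} (f(m)/d(m))² dH^{n−1}(m) ≤ 1. Then f is Lebesgue integrable on B, i.e. ∫_B |f(m)| dm < ∞. -/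
/-!
Inside `B_{r₀}` the function is square integrable, hence integrable. On the annulus
`A = B \ B_{r₀}` one has `|f| ≤ (f/d)² + d²` pointwise, so it suffices to bound
`∫_A (f/d)²`. Polar coordinates disintegrate Lebesgue measure along the cone measure
`μ.toSphere` on the unit sphere, and this measure is dominated by a multiple of `μH[n-1]`:
the cone over a cap of diameter `δ` is covered by `⌈1/δ⌉` balls of radius `2δ`, so the cap has
cone measure `O(δ^(n-1))`. Rescaling the unit sphere to `∂B_r` then gives the coarea-type
inequality `∫_A g ≤ C ∫_{r₀}^{√b} ∫_{∂B_r} g dH^{n-1} dr`, and the right-hand side is at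
most `C (√b - r₀)` for `g = (f/d)²`.
-/

open MeasureTheory Measure Metric Set Filter Topology Module
open scoped Pointwise ENNReal NNReal

section

variable {E : Type*} [NormedAddCommGroup E] [NormedSpace ℝ E] [MeasurableSpace E] [BorelSpace E]

theorem setLIntegral_sphere_hausdorffMeasure_eq {d : ℝ} (hd : 0 ≤ d) {r : ℝ} (hr : 0 < r)
    (g : E → ℝ≥0∞) :
    ∫⁻ x in sphere 0 r, g x ∂μH[d] =
      ENNReal.ofReal r ^ d * ∫⁻ ω : sphere (0 : E) 1, g (r • (ω : E)) ∂μH[d] := by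
  set T : sphere (0 : E) 1 → E := fun ω => r • (ω : E)
  have hT : MeasurableEmbedding T :=
    (MeasurableEquiv.smul₀ r hr.ne').measurableEmbedding.comp
      (MeasurableEmbedding.subtype_coe isClosed_sphere.measurableSet)
  have hrange : range T = sphere 0 r := by
    rw [show T = (r • ·) ∘ Subtype.val from rfl, range_comp, Subtype.range_coe, image_smul,
      smul_sphere' hr.ne', smul_zero, Real.norm_of_nonneg hr.le, mul_one]
  have hcomap : comap T μH[d] = ENNReal.ofReal r ^ d • (μH[d] : Measure (sphere (0 : E) 1)) := by
    refine Measure.ext fun A hA => ?_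
    rw [hT.comap_apply, Measure.smul_apply, smul_eq_mul,
      show T '' A = r • ((↑) '' A) by rw [← image_smul, image_image],
      hausdorffMeasure_smul₀ hd hr.ne',
      isometry_subtype_coe.hausdorffMeasure_image (.inl hd), ENNReal.smul_def, smul_eq_mul,
      ENNReal.coe_rpow_of_nonneg _ hd, ← enorm_eq_nnnorm, Real.enorm_eq_ofReal hr.le]
  rw [← hrange, ← hT.map_comap, hT.lintegral_map, hcomap, lintegral_smul_measure, smul_eq_mul]

theorem addHaar_Ioo_smul_le [FiniteDimensional ℝ E] (μ : Measure E) [μ.IsAddHaarMeasure]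
    {x₀ : E} (hx₀ : ‖x₀‖ ≤ 1) {δ : ℝ} (hδ : 0 < δ) {t : Set E} (ht : t ⊆ closedBall x₀ δ) :
    μ (Ioo (0 : ℝ) 1 • t) ≤
      ⌈δ⁻¹⌉₊ * (ENNReal.ofReal ((2 * δ) ^ finrank ℝ E) * μ (ball 0 1)) := by
  have hcover :
      Ioo (0 : ℝ) 1 • t ⊆ ⋃ k ∈ Finset.range ⌈δ⁻¹⌉₊, closedBall ((k * δ) • x₀) (2 * δ) := by
    rintro _ ⟨c, ⟨hc0, hc1⟩, x, hx, rfl⟩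
    set k := ⌊c / δ⌋₊
    have hk : k * δ ≤ c := (le_div_iff₀ hδ).1 (Nat.floor_le (by positivity))
    have hk' : c < (k + 1) * δ := (div_lt_iff₀ hδ).1 (Nat.lt_floor_add_one _)
    refine mem_biUnion (x := k) (Finset.mem_range.2 ?_) ?_
    · refine Nat.cast_lt.1 (lt_of_le_of_lt (Nat.floor_le (by positivity)) ?_ |>.trans_le
        (Nat.le_ceil _))
      rw [div_lt_iff₀ hδ, inv_mul_cancel₀ hδ.ne']
      exact hc1
    · have h₁ : dist (c • x) (c • x₀) ≤ δ := by
        rw [dist_smul₀, Real.norm_of_nonneg hc0.le]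
        nlinarith [mem_closedBall.1 (ht hx), dist_nonneg (x := x) (y := x₀)]
      have h₂ : dist (c • x₀) ((k * δ) • x₀) ≤ δ := by
        rw [dist_eq_norm, ← sub_smul, norm_smul, Real.norm_of_nonneg (by linarith)]
        nlinarith [norm_nonneg x₀]
      exact mem_closedBall.2 ((dist_triangle _ _ _).trans (by linarith))
  calc μ (Ioo (0 : ℝ) 1 • t)
      ≤ ∑ k ∈ Finset.range ⌈δ⁻¹⌉₊, μ (closedBall ((k * δ) • x₀) (2 * δ)) :=
        (measure_mono hcover).trans (measure_biUnion_finset_le _ _)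
    _ = _ := by
        simp only [addHaar_closedBall μ _ (by positivity : 0 ≤ 2 * δ), Finset.sum_const,
          Finset.card_range, nsmul_eq_mul]

variable [Nontrivial E] [FiniteDimensional ℝ E] (μ : Measure E) [μ.IsAddHaarMeasure]

theorem lintegral_eq_lintegral_Ioi_mul_lintegral_toSphere {g : E → ℝ≥0∞} (hg : Measurable g) :
    ∫⁻ x, g x ∂μ = ∫⁻ r in Ioi 0,
      ENNReal.ofReal (r ^ (finrank ℝ E - 1)) * ∫⁻ ω, g (r • (ω : E)) ∂μ.toSphere := by
  set e := homeomorphUnitSphereProd E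
  have hge : Measurable fun p : sphere (0 : E) 1 × Ioi (0 : ℝ) => g ((p.2 : ℝ) • (p.1 : E)) :=
    hg.comp (by fun_prop)
  calc ∫⁻ x, g x ∂μ = ∫⁻ x : ({0}ᶜ : Set E), g x ∂(μ.comap (↑)) := by
        rw [lintegral_subtype_comap (measurableSet_singleton _).compl, restrict_compl_singleton]
    _ = ∫⁻ p, g ((p.2 : ℝ) • (p.1 : E)) ∂(μ.toSphere.prod (volumeIoiPow (finrank ℝ E - 1))) := by
        rw [← μ.measurePreserving_homeomorphUnitSphereProd.lintegral_comp_emb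
          e.measurableEmbedding]
        congr! with x
        exact congrArg Subtype.val (e.symm_apply_apply x).symm
    _ = ∫⁻ r, ∫⁻ ω, g ((r : ℝ) • (ω : E)) ∂μ.toSphere ∂(volumeIoiPow (finrank ℝ E - 1)) :=
        lintegral_prod_symm _ hge.aemeasurable
    _ = _ := by
        rw [volumeIoiPow, lintegral_withDensity_eq_lintegral_mul _ (by fun_prop)
          hge.lintegral_prod_left']
        exact lintegral_subtype_comap measurableSet_Ioi
          fun r => ENNReal.ofReal (r ^ (finrank ℝ E - 1)) * ∫⁻ ω, g (r • (ω : E)) ∂μ.toSphere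

theorem toSphere_preimage_closedBall_le {x₀ : E} (hx₀ : ‖x₀‖ ≤ 1) {δ : ℝ} (hδ : 0 < δ)
    (hδ₁ : δ ≤ 1) :
    μ.toSphere ((↑) ⁻¹' closedBall x₀ δ) ≤
      ENNReal.ofReal (finrank ℝ E * 2 ^ (finrank ℝ E + 1)) * μ (ball 0 1) *
        ENNReal.ofReal (δ ^ (finrank ℝ E - 1)) := by
  set d := finrank ℝ E
  have hd : 0 < d := finrank_pos
  have hceil : (⌈δ⁻¹⌉₊ : ℝ) * (2 * δ) ^ d ≤ 2 ^ (d + 1) * δ ^ (d - 1) := by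
    have h₁ : (⌈δ⁻¹⌉₊ : ℝ) ≤ 2 * δ⁻¹ :=
      (Nat.ceil_lt_add_one (by positivity)).le.trans (by linarith [one_le_inv₀ hδ |>.2 hδ₁])
    calc (⌈δ⁻¹⌉₊ : ℝ) * (2 * δ) ^ d ≤ 2 * δ⁻¹ * (2 * δ) ^ d := by gcongr
      _ = 2 ^ (d + 1) * δ ^ (d - 1) := by
        rw [mul_pow, ← pow_sub_one_mul hd.ne' δ, pow_succ]
        field_simp
  calc μ.toSphere ((↑) ⁻¹' closedBall x₀ δ)
      = d * μ (Ioo (0 : ℝ) 1 • ((↑) '' ((↑) ⁻¹' closedBall x₀ δ : Set (sphere (0 : E) 1)))) :=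
        μ.toSphere_apply' (measurableSet_closedBall.preimage measurable_subtype_coe)
    _ ≤ d * (⌈δ⁻¹⌉₊ * (ENNReal.ofReal ((2 * δ) ^ d) * μ (ball 0 1))) := by
        gcongr
        exact addHaar_Ioo_smul_le μ hx₀ hδ (image_preimage_subset _ _)
    _ = ENNReal.ofReal (d * (⌈δ⁻¹⌉₊ * (2 * δ) ^ d)) * μ (ball 0 1) := by
        rw [ENNReal.ofReal_mul (by positivity), ENNReal.ofReal_mul (by positivity),
          ENNReal.ofReal_natCast, ENNReal.ofReal_natCast]
        ring
    _ ≤ ENNReal.ofReal (d * (2 ^ (d + 1) * δ ^ (d - 1))) * μ (ball 0 1) := by gcongr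
    _ = _ := by
        rw [← mul_assoc, ENNReal.ofReal_mul (by positivity)]
        ring

theorem exists_toSphere_le_smul_hausdorffMeasure :
    ∃ C : ℝ≥0∞, C ≠ ∞ ∧ μ.toSphere ≤ C • μH[(finrank ℝ E : ℝ) - 1] := by
  set d := finrank ℝ E
  have hd : 0 < d := finrank_pos
  set K := ENNReal.ofReal (d * 2 ^ (d + 1)) * μ (ball 0 1)
  have hK₀ : K ≠ 0 := mul_ne_zero (by simp [hd.ne']) (measure_ball_pos μ 0 one_pos).ne'
  have hK : K ≠ ∞ := ENNReal.mul_ne_top ENNReal.ofReal_ne_top measure_ball_lt_top.ne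
  have hsmall : ∀ s : Set (sphere (0 : E) 1), ediam s ≤ 2⁻¹ →
      (K⁻¹ • μ.toSphere) s ≤ ediam s ^ ((d : ℝ) - 1) := by
    intro s hs
    rcases s.eq_empty_or_nonempty with rfl | ⟨x₀, hx₀⟩
    · simp
    have hD : ediam s ≠ ∞ := ne_top_of_le_ne_top (by simp) hs
    have hD₁ : (ediam s).toReal < 1 :=
      ENNReal.toReal_lt_of_lt_ofReal (by simpa using hs.trans_lt (by norm_num))
    have hbound : ∀ δ ∈ Ioo (ediam s).toReal 1,
        μ.toSphere s ≤ K * ENNReal.ofReal (δ ^ (d - 1)) := by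
      rintro δ ⟨hδD, hδ₁⟩
      refine (measure_mono fun y hy => ?_).trans <| toSphere_preimage_closedBall_le μ
        (norm_eq_of_mem_sphere x₀).le (hδD.trans_le' ENNReal.toReal_nonneg) hδ₁.le
      rw [mem_preimage, mem_closedBall, ← Subtype.dist_eq, dist_edist]
      exact (ENNReal.toReal_mono hD (edist_le_ediam_of_mem hy hx₀)).trans hδD.le
    have hlim : Tendsto (fun δ : ℝ => K * ENNReal.ofReal (δ ^ (d - 1))) (𝓝[>] (ediam s).toReal)
        (𝓝 (K * ENNReal.ofReal ((ediam s).toReal ^ (d - 1)))) :=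
      ((ENNReal.continuous_const_mul hK).comp (ENNReal.continuous_ofReal.comp
        (continuous_pow _))).continuousWithinAt
    -- Letting `δ` decrease to `diam s` (rather than taking `δ = diam s`) also covers `diam s = 0`.
    have hle := ge_of_tendsto hlim (eventually_of_mem (Ioo_mem_nhdsGT hD₁) hbound)
    rw [Measure.smul_apply, smul_eq_mul, ENNReal.inv_mul_le_iff hK₀ hK]
    refine hle.trans_eq ?_
    rw [ENNReal.ofReal_pow ENNReal.toReal_nonneg, ENNReal.ofReal_toReal hD, ← ENNReal.rpow_natCast,
      Nat.cast_pred hd]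
  refine ⟨K, hK, fun A => ?_⟩
  have := le_hausdorffMeasure _ _ _ (by norm_num : (0 : ℝ≥0∞) < 2⁻¹) hsmall A
  rw [Measure.smul_apply, smul_eq_mul] at this ⊢
  rwa [← ENNReal.inv_mul_le_iff hK₀ hK]

theorem exists_lintegral_le_mul_lintegral_lintegral_sphere :
    ∃ C : ℝ≥0∞, C ≠ ∞ ∧ ∀ g : E → ℝ≥0∞, Measurable g →
      ∫⁻ x, g x ∂μ ≤ C * ∫⁻ r in Ioi 0, ∫⁻ x in sphere 0 r, g x ∂μH[(finrank ℝ E : ℝ) - 1] := by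
  obtain ⟨C, hC, hσ⟩ := exists_toSphere_le_smul_hausdorffMeasure μ
  refine ⟨C, hC, fun g hg => ?_⟩
  have hd : 1 ≤ finrank ℝ E := finrank_pos
  rw [lintegral_eq_lintegral_Ioi_mul_lintegral_toSphere μ hg, ← lintegral_const_mul' _ _ hC]
  refine setLIntegral_mono' measurableSet_Ioi fun r (hr : 0 < r) => ?_
  calc ENNReal.ofReal (r ^ (finrank ℝ E - 1)) * ∫⁻ ω, g (r • (ω : E)) ∂μ.toSphere
      ≤ ENNReal.ofReal (r ^ (finrank ℝ E - 1)) *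
          ∫⁻ ω : sphere (0 : E) 1, g (r • (ω : E)) ∂(C • μH[(finrank ℝ E : ℝ) - 1]) := by
        gcongr
    _ = C * ∫⁻ x in sphere 0 r, g x ∂μH[(finrank ℝ E : ℝ) - 1] := by
        rw [setLIntegral_sphere_hausdorffMeasure_eq (by simpa using hd) hr, lintegral_smul_measure,
          ENNReal.ofReal_pow hr.le, ← ENNReal.rpow_natCast, Nat.cast_sub hd, Nat.cast_one,
          smul_eq_mul]
        ring

theorem setLIntegral_ball_diff_ball_lt_top {g : E → ℝ≥0∞} (hg : Measurable g) {r₀ R : ℝ}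
    {K : ℝ≥0∞} (hK : K ≠ ∞)
    (hsphere : ∀ᵐ r ∂volume.restrict (Ioo r₀ R),
      ∫⁻ x in sphere 0 r, g x ∂μH[(finrank ℝ E : ℝ) - 1] ≤ K) :
    ∫⁻ x in ball 0 R \ ball 0 r₀, g x ∂μ < ∞ := by
  obtain ⟨C, hC, hcoarea⟩ := exists_lintegral_le_mul_lintegral_lintegral_sphere μ
  set A := ball (0 : E) R \ ball 0 r₀
  have hA : MeasurableSet A := measurableSet_ball.diff measurableSet_ball
  set Φ := fun r => ∫⁻ x in sphere 0 r, g x ∂μH[(finrank ℝ E : ℝ) - 1]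
  have hΦ : ∀ r, ∫⁻ x in sphere 0 r, A.indicator g x ∂μH[(finrank ℝ E : ℝ) - 1] =
      (Ico r₀ R).indicator Φ r := by
    intro r
    have hmem : ∀ x ∈ sphere (0 : E) r, x ∈ A ↔ r ∈ Ico r₀ R := by
      intro x hx
      simp [A, mem_sphere_zero_iff_norm.1 hx, and_comm]
    by_cases hr : r ∈ Ico r₀ R
    · rw [indicator_of_mem hr]
      exact setLIntegral_congr_fun isClosed_sphere.measurableSet
        fun x hx => indicator_of_mem ((hmem x hx).2 hr) g
    · rw [indicator_of_notMem hr, ← lintegral_zero]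
      exact setLIntegral_congr_fun isClosed_sphere.measurableSet
        fun x hx => indicator_of_notMem (mt (hmem x hx).1 hr) g
  calc ∫⁻ x in A, g x ∂μ = ∫⁻ x, A.indicator g x ∂μ := (lintegral_indicator hA _).symm
    _ ≤ C * ∫⁻ r in Ioi 0, (Ico r₀ R).indicator Φ r := by
        simpa only [hΦ] using hcoarea _ (hg.indicator hA)
    _ ≤ C * ∫⁻ r in Ioo r₀ R, Φ r := by
        rw [setLIntegral_congr Ioo_ae_eq_Ico, ← lintegral_indicator measurableSet_Ico]
        gcongr
        exact Measure.restrict_le_self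
    _ ≤ C * ∫⁻ _ in Ioo r₀ R, K := by
        gcongr C * ?_
        exact lintegral_mono_ae hsphere
    _ < ∞ := by
        rw [setLIntegral_const, Real.volume_Ioo]
        exact ENNReal.mul_lt_top hC.lt_top (ENNReal.mul_lt_top hK.lt_top ENNReal.ofReal_lt_top)

end

theorem abs_le_div_sq_add_sq (x : ℝ) {d : ℝ} (hd : d ≠ 0) : |x| ≤ (x / d) ^ 2 + d ^ 2 := by
  calc |x| = |x / d| * |d| := by rw [← abs_mul, div_mul_cancel₀ x hd]
    _ ≤ (x / d) ^ 2 + d ^ 2 := by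
      nlinarith [two_mul_le_add_sq |x / d| |d|, sq_abs (x / d), sq_abs d, abs_nonneg (x / d),
        abs_nonneg d]

theorem boundary_requirement_implies_L1_general
    (n : ℕ) (hn : 1 ≤ n) (b : ℝ)
    (f : EuclideanSpace ℝ (Fin n) → ℝ) (hf : Measurable f)
    (r₀ : ℝ)
    (hf2 : MeasureTheory.IntegrableOn (fun m => f m ^ 2)
      (Metric.ball (0 : EuclideanSpace ℝ (Fin n)) r₀))
    (hbd : ∀ᵐ r ∂(MeasureTheory.volume.restrict (Set.Ioo r₀ (Real.sqrt b))),
      (∫⁻ m in Metric.sphere (0 : EuclideanSpace ℝ (Fin n)) r,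
          ENNReal.ofReal ((f m / (Real.sqrt b - ‖m‖)) ^ 2) ∂(μH[(n : ℝ) - 1])) ≤ 1) :
    MeasureTheory.IntegrableOn f
      (Metric.ball (0 : EuclideanSpace ℝ (Fin n)) (Real.sqrt b)) := by
  have : Nonempty (Fin n) := ⟨⟨0, hn⟩⟩
  set R := Real.sqrt b
  set A := ball (0 : EuclideanSpace ℝ (Fin n)) R \ ball 0 r₀
  have hinner : IntegrableOn f (ball 0 r₀) :=
    have : IsFiniteMeasure (volume.restrict (ball (0 : EuclideanSpace ℝ (Fin n)) r₀)) :=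
      isFiniteMeasure_restrict.2 measure_ball_lt_top.ne
    ((memLp_two_iff_integrable_sq hf.aestronglyMeasurable).2 hf2).integrable one_le_two
  have hweight : ∫⁻ m in A, ENNReal.ofReal ((f m / (R - ‖m‖)) ^ 2) < ∞ :=
    setLIntegral_ball_diff_ball_lt_top volume (by fun_prop) ENNReal.one_ne_top
      (by rwa [finrank_euclideanSpace_fin])
  have hpointwise : ∀ m ∈ A,
      ‖f m‖ₑ ≤ ENNReal.ofReal ((f m / (R - ‖m‖)) ^ 2) + ENNReal.ofReal (R ^ 2) := by
    rintro m ⟨hmR, -⟩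
    have hm : 0 < R - ‖m‖ := sub_pos.2 (mem_ball_zero_iff.1 hmR)
    rw [Real.enorm_eq_ofReal_abs, ← ENNReal.ofReal_add (by positivity) (by positivity)]
    refine ENNReal.ofReal_le_ofReal ((abs_le_div_sq_add_sq _ hm.ne').trans ?_)
    gcongr
    linarith [norm_nonneg m]
  have houter : IntegrableOn f A := by
    refine ⟨hf.aestronglyMeasurable, (setLIntegral_mono'
      (measurableSet_ball.diff measurableSet_ball) hpointwise).trans_lt ?_⟩
    rw [lintegral_add_right _ measurable_const, setLIntegral_const]
    exact ENNReal.add_lt_top.2 ⟨hweight, ENNReal.mul_lt_top ENNReal.ofReal_lt_top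
      (measure_lt_top_of_subset sdiff_subset measure_ball_lt_top.ne)⟩
  exact (hinner.union houter).mono_set (by rw [union_sdiff_self]; exact subset_union_right)

/-- If `f` is measurable, square integrable on the ball `B_{r₀}`, and for almost every
`r ∈ (r₀, √b)` the trace bound `∫_{∂B_r} (f/d)² dH^{n−1} ≤ 1` holds (with
`d(m) = √b − ‖m‖`), then `f` is Lebesgue integrable on the ball `B = B(0, √b)`.
This is the claim that the boundary requirement `lim_{r→√b} ‖f d^{−1}‖_{L²(∂B_r)} = 0`
ensures `f ∈ L¹(B)`. -/
theorem boundary_requirement_implies_L1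
    (n : ℕ) (hn : 1 ≤ n) (b : ℝ) (hb : 0 < b)
    (f : EuclideanSpace ℝ (Fin n) → ℝ) (hf : Measurable f)
    (r₀ : ℝ) (hr₀ : r₀ ∈ Set.Ioo 0 (Real.sqrt b))
    (hf2 : MeasureTheory.IntegrableOn (fun m => f m ^ 2)
      (Metric.ball (0 : EuclideanSpace ℝ (Fin n)) r₀))
    (hbd : ∀ᵐ r ∂(MeasureTheory.volume.restrict (Set.Ioo r₀ (Real.sqrt b))),
      (∫⁻ m in Metric.sphere (0 : EuclideanSpace ℝ (Fin n)) r,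
          ENNReal.ofReal ((f m / (Real.sqrt b - ‖m‖)) ^ 2) ∂(μH[(n : ℝ) - 1])) ≤ 1) :
    MeasureTheory.IntegrableOn f
      (Metric.ball (0 : EuclideanSpace ℝ (Fin n)) (Real.sqrt b)) :=
  boundary_requirement_implies_L1_general n hn b f hf r₀ hf2 hbd
end

section
/- Let b > 0 with b ≠ 2, let κ be an n×n real matrix, and let f be continuously differentiable on an open neighborhood of the closed ball of radius √b with f ≡ 0 on the boundary sphere ∂B. Fix p ∈ ∂B and define the flux J(m) = ( (b m f(m))/(2ρ(m)) + (1/2)∇f(m) − (κm) f(m) ) · (m/‖m‖) for m ∈ B \ {0}. If the limit L = lim_{t→0⁺} f((1−t)p)/(t√b) exists, then lim_{t→0⁺} J((1−t)p) = ((b−2)/4) · L. In particular, the zero-flux boundary condition lim_{t→0⁺} J((1−t)p) = 0 holds if and only if L = 0, i.e. if and only if f(m)/d(m) → 0 along the radius toward p. -/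
open Filter
open scoped Topology RealInnerProductSpace

/-! Along the radius `t ↦ (1 - t) p` the flux is an explicit combination of
`f((1-t)p)/(t√b)`, `⟪∇f((1-t)p), p⟫` and `f((1-t)p)`. Since `f p = 0`, the quotient
`f((1-t)p)/t` tends to the radial derivative `-⟪∇f(p), p⟫`, so `⟪∇f(p), p⟫ = -L√b`.
The singular term `b f m/(2ρ(m))` contributes `(b/4) L`, the gradient term `-L/2`, and
the drift term vanishes in the limit, giving `((b-2)/4) L`. -/

lemma tendsto_nhds_zero_iff_of_tendsto_mul {α M : Type*} [MulZeroClass M] [NoZeroDivisors M]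
    [TopologicalSpace M] [T2Space M] {l : Filter α} [l.NeBot] {u : α → M} {c L : M}
    (hu : Tendsto u l (𝓝 (c * L))) (hc : c ≠ 0) : Tendsto u l (𝓝 0) ↔ L = 0 :=
  ⟨fun h0 => (mul_eq_zero.mp (tendsto_nhds_unique hu h0)).resolve_left hc,
    fun hL => by simpa [hL] using hu⟩

section Ray

variable {E : Type*} [NormedAddCommGroup E] [InnerProductSpace ℝ E]

lemma tendsto_one_sub_smul_nhdsGT (p : E) :
    Tendsto (fun t : ℝ => (1 - t) • p) (𝓝[>] 0) (𝓝 p) := by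
  have h : Continuous fun t : ℝ => (1 - t) • p := by fun_prop
  simpa using h.continuousAt.tendsto.mono_left (nhdsWithin_le_nhds (a := (0 : ℝ)))

lemma tendsto_comp_one_sub_smul_div_of_eq_zero {f : E → ℝ} {p : E}
    (hf : DifferentiableAt ℝ f p) (hfp : f p = 0) :
    Tendsto (fun t : ℝ => f ((1 - t) • p) / t) (𝓝[≠] 0) (𝓝 (-fderiv ℝ f p p)) := by
  have hray : HasDerivAt (fun t : ℝ => (1 - t) • p) (-p) 0 := by
    simpa using ((hasDerivAt_id (0 : ℝ)).const_sub 1).smul_const p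
  have hcomp : HasDerivAt (fun t : ℝ => f ((1 - t) • p)) (fderiv ℝ f p (-p)) 0 :=
    (by simpa using hf.hasFDerivAt : HasFDerivAt f _ ((1 - (0 : ℝ)) • p)).comp_hasDerivAt 0 hray
  rw [← map_neg]
  refine (hasDerivAt_iff_tendsto_slope.mp hcomp).congr fun t => ?_
  simp [slope_def_field, hfp]

lemma ContDiffAt.continuousAt_gradient [CompleteSpace E] {f : E → ℝ} {p : E}
    (hf : ContDiffAt ℝ 1 f p) : ContinuousAt (gradient f) p :=
  (InnerProductSpace.toDual ℝ E).symm.continuous.continuousAt.comp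
    (hf.continuousAt_fderiv one_ne_zero)

variable [CompleteSpace E]

noncomputable def flux (b : ℝ) (A : E →ₗ[ℝ] E) (f : E → ℝ) (m : E) : ℝ :=
  ⟪(b * f m / (2 * (b - ‖m‖ ^ 2))) • m + (2 : ℝ)⁻¹ • gradient f m - f m • A m, ‖m‖⁻¹ • m⟫

lemma flux_one_sub_smul {b t : ℝ} (hb : 0 < b) {p : E} (hp : ‖p‖ = √b)
    (A : E →ₗ[ℝ] E) (f : E → ℝ) (ht0 : 0 < t) (ht1 : t < 1) :
    flux b A f ((1 - t) • p) =
      f ((1 - t) • p) / (t * √b) * (b * (1 - t) / (2 * (2 - t)))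
        + ⟪gradient f ((1 - t) • p), p⟫ / (2 * √b)
        - f ((1 - t) • p) * ((1 - t) * ⟪A p, p⟫ / √b) := by
  have hss : √b ^ 2 = b := Real.sq_sqrt hb.le
  have hnorm : ‖(1 - t) • p‖ = (1 - t) * √b := by
    rw [norm_smul, hp, Real.norm_eq_abs, abs_of_pos (by linarith)]
  have hpp : ⟪p, p⟫ = b := by rw [real_inner_self_eq_norm_sq, hp, hss]
  have h1t : 1 - t ≠ 0 := by linarith
  have h2t : 2 - t ≠ 0 := by linarith
  have hden : b - ((1 - t) * √b) ^ 2 = b * (t * (2 - t)) := by rw [mul_pow, hss]; ring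
  simp only [flux, map_smul, inner_sub_left, inner_add_left, real_inner_smul_left,
    real_inner_smul_right, hpp, hnorm, hden]
  field_simp

lemma tendsto_flux_one_sub_smul {b L : ℝ} (hb : 0 < b) {p : E} (hp : ‖p‖ = √b)
    (A : E →ₗ[ℝ] E) {f : E → ℝ} (hf : ContDiffAt ℝ 1 f p) (hfp : f p = 0)
    (hL : Tendsto (fun t : ℝ => f ((1 - t) • p) / (t * √b)) (𝓝[>] 0) (𝓝 L)) :
    Tendsto (fun t : ℝ => flux b A f ((1 - t) • p)) (𝓝[>] 0) (𝓝 ((b - 2) / 4 * L)) := by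
  have hs : √b ≠ 0 := (Real.sqrt_pos.mpr hb).ne'
  have hradial : ⟪gradient f p, p⟫ = -(L * √b) := by
    have hslope := (tendsto_comp_one_sub_smul_div_of_eq_zero
      (hf.differentiableAt one_ne_zero) hfp).mono_left (nhdsGT_le_nhdsNE 0)
    have hLs : Tendsto (fun t : ℝ => f ((1 - t) • p) / t) (𝓝[>] 0) (𝓝 (L * √b)) := by
      refine (hL.mul_const √b).congr' ?_
      filter_upwards [self_mem_nhdsWithin] with t (ht : 0 < t)
      field_simp
    rw [inner_gradient_left, tendsto_nhds_unique hLs hslope, neg_neg]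
  have hray := tendsto_one_sub_smul_nhdsGT p
  have hfray : Tendsto (fun t : ℝ => f ((1 - t) • p)) (𝓝[>] 0) (𝓝 0) := by
    have h := hf.continuousAt.tendsto.comp hray
    rwa [hfp] at h
  have hgray : Tendsto (fun t : ℝ => ⟪gradient f ((1 - t) • p), p⟫) (𝓝[>] 0)
      (𝓝 (-(L * √b))) :=
    hradial ▸ (hf.continuousAt_gradient.tendsto.comp hray).inner tendsto_const_nhds
  have hcoeff : ∀ c : ℝ → ℝ, ContinuousAt c 0 → Tendsto c (𝓝[>] 0) (𝓝 (c 0)) :=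
    fun c hc => hc.tendsto.mono_left nhdsWithin_le_nhds
  have hsingular := hcoeff (fun t => b * (1 - t) / (2 * (2 - t)))
    (ContinuousAt.div (by fun_prop) (by fun_prop) (by norm_num))
  have hdrift := hcoeff (fun t => (1 - t) * ⟪A p, p⟫ / √b) (by fun_prop)
  have hlim := ((hL.mul hsingular).add (hgray.div_const (2 * √b))).sub (hfray.mul hdrift)
  convert hlim.congr' ?_ using 2
  · field_simp
    ring
  · filter_upwards [Ioo_mem_nhdsGT one_pos] with t ⟨ht0, ht1⟩
    exact (flux_one_sub_smul hb hp A f ht0 ht1).symm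

end Ray

theorem flux_boundary_condition_equivalence_general
    (n : ℕ) (b : ℝ) (hb : 0 < b) (hb2 : b ≠ 2)
    (κ : Matrix (Fin n) (Fin n) ℝ)
    (f : EuclideanSpace ℝ (Fin n) → ℝ) (U : Set (EuclideanSpace ℝ (Fin n)))
    (hU : IsOpen U)
    (hBU : Metric.closedBall (0 : EuclideanSpace ℝ (Fin n)) (Real.sqrt b) ⊆ U)
    (hf : ContDiffOn ℝ 1 f U)
    (hf0 : ∀ m ∈ Metric.sphere (0 : EuclideanSpace ℝ (Fin n)) (Real.sqrt b), f m = 0)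
    (p : EuclideanSpace ℝ (Fin n))
    (hp : p ∈ Metric.sphere (0 : EuclideanSpace ℝ (Fin n)) (Real.sqrt b))
    (J : EuclideanSpace ℝ (Fin n) → ℝ)
    (hJ : ∀ m : EuclideanSpace ℝ (Fin n),
      J m = ⟪(b * f m / (2 * (b - ‖m‖ ^ 2))) • m
              + (2 : ℝ)⁻¹ • gradient f m
              - f m • (Matrix.toEuclideanLin κ m),
            ‖m‖⁻¹ • m⟫)
    (L : ℝ)
    (hL : Filter.Tendsto (fun t : ℝ => f ((1 - t) • p) / (t * Real.sqrt b))
      (𝓝[>] 0) (𝓝 L)) :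
    Filter.Tendsto (fun t : ℝ => J ((1 - t) • p)) (𝓝[>] 0) (𝓝 ((b - 2) / 4 * L)) ∧
    (Filter.Tendsto (fun t : ℝ => J ((1 - t) • p)) (𝓝[>] 0) (𝓝 0) ↔ L = 0) := by
  obtain rfl : J = flux b (Matrix.toEuclideanLin κ) f := funext hJ
  have hpU : p ∈ U := hBU (Metric.sphere_subset_closedBall hp)
  have hlim := tendsto_flux_one_sub_smul hb (mem_sphere_zero_iff_norm.mp hp)
    (Matrix.toEuclideanLin κ) (hf.contDiffAt (hU.mem_nhds hpU)) (hf0 p hp) hL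
  exact ⟨hlim, tendsto_nhds_zero_iff_of_tendsto_mul hlim
    (div_ne_zero (sub_ne_zero.mpr hb2) four_ne_zero)⟩

/-- Let `b > 0`, `b ≠ 2`, let `κ` be an `n×n` real matrix, and let `f` be `C¹` on an
open neighborhood of the closed ball of radius `√b`, vanishing on the boundary sphere.
Fix `p ∈ ∂B` and let `J(m) = ((b m f)/(2ρ) + (1/2)∇f − (κm) f) · (m/‖m‖)` be the flux.
If `L = lim_{t→0⁺} f((1−t)p)/(t√b)` exists, then `lim_{t→0⁺} J((1−t)p) = ((b−2)/4)·L`;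
in particular the zero-flux condition `lim_{t→0⁺} J((1−t)p) = 0` holds iff `L = 0`,
i.e. iff `f/d → 0` along the radius toward `p`. -/
theorem flux_boundary_condition_equivalence
    (n : ℕ) (hn : 1 ≤ n) (b : ℝ) (hb : 0 < b) (hb2 : b ≠ 2)
    (κ : Matrix (Fin n) (Fin n) ℝ)
    (f : EuclideanSpace ℝ (Fin n) → ℝ) (U : Set (EuclideanSpace ℝ (Fin n)))
    (hU : IsOpen U)
    (hBU : Metric.closedBall (0 : EuclideanSpace ℝ (Fin n)) (Real.sqrt b) ⊆ U)
    (hf : ContDiffOn ℝ 1 f U)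
    (hf0 : ∀ m ∈ Metric.sphere (0 : EuclideanSpace ℝ (Fin n)) (Real.sqrt b), f m = 0)
    (p : EuclideanSpace ℝ (Fin n))
    (hp : p ∈ Metric.sphere (0 : EuclideanSpace ℝ (Fin n)) (Real.sqrt b))
    (J : EuclideanSpace ℝ (Fin n) → ℝ)
    (hJ : ∀ m : EuclideanSpace ℝ (Fin n),
      J m = ⟪(b * f m / (2 * (b - ‖m‖ ^ 2))) • m
              + (2 : ℝ)⁻¹ • gradient f m
              - f m • (Matrix.toEuclideanLin κ m),
            ‖m‖⁻¹ • m⟫)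
    (L : ℝ)
    (hL : Filter.Tendsto (fun t : ℝ => f ((1 - t) • p) / (t * Real.sqrt b))
      (𝓝[>] 0) (𝓝 L)) :
    Filter.Tendsto (fun t : ℝ => J ((1 - t) • p)) (𝓝[>] 0) (𝓝 ((b - 2) / 4 * L)) ∧
    (Filter.Tendsto (fun t : ℝ => J ((1 - t) • p)) (𝓝[>] 0) (𝓝 0) ↔ L = 0) :=
  flux_boundary_condition_equivalence_general n b hb hb2 κ f U hU hBU hf hf0 p hp J hJ L hL
end

section
/- Assume b > 2 and set β = 2 − b/2. Let M ≥ 0. There exist constants C₁ > 0 and C₂ > 0, depending only on n, b and M, such that for every n×n real matrix κ with operator norm at most M and every smooth function w : ℝⁿ → ℝ with compact support contained in B, C₁ ∫_B (‖∇w‖² + w²) ρ^β dm ≤ (1/2) ∫_B ‖∇w‖² ρ^β dm + ∫_B ((κm)·∇w(m)) w(m) ρ(m)^β dm + C₂ ∫_B w² ρ^β dm. -/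
set_option maxHeartbeats 1000000
open MeasureTheory
open scoped RealInnerProductSpace

-- continuity + integrability helper
lemma aux_integrable {n : ℕ} {b β : ℝ} (hb : 0 < b)
    (g : EuclideanSpace ℝ (Fin n) → ℝ) (hg : Continuous g)
    (hgc : HasCompactSupport g)
    (hsupp : tsupport g ⊆ Metric.ball (0 : EuclideanSpace ℝ (Fin n)) (Real.sqrt b)) :
    Integrable (fun m => g m * (b - ‖m‖ ^ 2) ^ β) := by
  have hcont : Continuous (fun m : EuclideanSpace ℝ (Fin n) => g m * (b - ‖m‖ ^ 2) ^ β) := by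
    rw [continuous_iff_continuousAt]
    intro x
    by_cases hx : x ∈ Metric.ball (0 : EuclideanSpace ℝ (Fin n)) (Real.sqrt b)
    · have hxb : 0 < b - ‖x‖ ^ 2 := by
        have : ‖x‖ < Real.sqrt b := by simpa using hx
        nlinarith [Real.sq_sqrt hb.le, norm_nonneg x, Real.sqrt_nonneg b]
      have h1 : ContinuousAt (fun m : EuclideanSpace ℝ (Fin n) => b - ‖m‖ ^ 2) x :=
        (continuous_const.sub ((continuous_norm).pow 2)).continuousAt
      exact hg.continuousAt.mul (h1.rpow_const (Or.inl hxb.ne'))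
    · have hx' : x ∈ (tsupport g)ᶜ := fun h => hx (hsupp h)
      have hopen : IsOpen (tsupport g)ᶜ := (isClosed_tsupport g).isOpen_compl
      have hev : (fun m => g m * (b - ‖m‖ ^ 2) ^ β) =ᶠ[nhds x] (fun _ => (0:ℝ)) := by
        filter_upwards [hopen.mem_nhds hx'] with y hy
        have : g y = 0 := image_eq_zero_of_notMem_tsupport hy
        simp [this]
      exact (continuousAt_const.congr hev.symm)
  have hcs : HasCompactSupport (fun m : EuclideanSpace ℝ (Fin n) => g m * (b - ‖m‖ ^ 2) ^ β) :=
    hgc.mul_right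
  exact hcont.integrable_of_hasCompactSupport hcs

lemma aux_grad_cont {n : ℕ} (w : EuclideanSpace ℝ (Fin n) → ℝ) (hw : ContDiff ℝ (⊤ : ℕ∞) w) :
    Continuous (gradient w) := by
  have h1 : Continuous (fderiv ℝ w) := hw.continuous_fderiv (by simp)
  have h2 : gradient w = fun x =>
      (InnerProductSpace.toDual ℝ (EuclideanSpace ℝ (Fin n))).symm (fderiv ℝ w x) :=
    funext fun x => rfl
  rw [h2]
  exact (InnerProductSpace.toDual ℝ (EuclideanSpace ℝ (Fin n))).symm.continuous.comp h1

/-- Gårding-type energy estimate (Lemma 2) for the bilinear form of the transformed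
Fokker–Planck equation, with `b > 2`, `β = 2 − b/2` and `ρ(m) = b − ‖m‖²`: there are
constants `C₁, C₂ > 0` depending only on `n`, `b`, `M` such that for every matrix `κ`
of operator norm at most `M` and every smooth `w` compactly supported in `B = B(0, √b)`,
`C₁ ‖w‖²_{H¹_β} ≤ (1/2)∫_B ‖∇w‖² ρ^β + ∫_B (κm·∇w) w ρ^β + C₂ ‖w‖²_{L²_β}`. -/
theorem garding_energy_estimate
    (n : ℕ) (hn : 1 ≤ n) (b : ℝ) (hb : 2 < b) (M : ℝ) (hM : 0 ≤ M) :
    ∃ C₁ C₂ : ℝ, 0 < C₁ ∧ 0 < C₂ ∧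
      ∀ κ : Matrix (Fin n) (Fin n) ℝ, ‖Matrix.toEuclideanCLM (𝕜 := ℝ) κ‖ ≤ M →
        ∀ w : EuclideanSpace ℝ (Fin n) → ℝ,
          ContDiff ℝ (⊤ : ℕ∞) w → HasCompactSupport w →
          tsupport w ⊆ Metric.ball (0 : EuclideanSpace ℝ (Fin n)) (Real.sqrt b) →
          C₁ * (∫ m in Metric.ball (0 : EuclideanSpace ℝ (Fin n)) (Real.sqrt b),
                (‖gradient w m‖ ^ 2 + w m ^ 2) * (b - ‖m‖ ^ 2) ^ (2 - b / 2))
            ≤ (1 / 2) * (∫ m in Metric.ball (0 : EuclideanSpace ℝ (Fin n)) (Real.sqrt b),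
                  ‖gradient w m‖ ^ 2 * (b - ‖m‖ ^ 2) ^ (2 - b / 2))
              + (∫ m in Metric.ball (0 : EuclideanSpace ℝ (Fin n)) (Real.sqrt b),
                  ⟪Matrix.toEuclideanLin κ m, gradient w m⟫ * w m * (b - ‖m‖ ^ 2) ^ (2 - b / 2))
              + C₂ * ∫ m in Metric.ball (0 : EuclideanSpace ℝ (Fin n)) (Real.sqrt b),
                  w m ^ 2 * (b - ‖m‖ ^ 2) ^ (2 - b / 2) := by
  have hb0 : (0:ℝ) < b := by linarith
  refine ⟨1/4, M^2 * b + 1, by norm_num, by nlinarith [sq_nonneg M], ?_⟩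
  intro κ hκ w hw hcs hsupp
  set β : ℝ := 2 - b / 2 with hβdef
  set B := Metric.ball (0 : EuclideanSpace ℝ (Fin n)) (Real.sqrt b) with hBdef
  -- gradient facts
  have hgrad_cont : Continuous (gradient w) := aux_grad_cont w hw
  have hgrad_supp : Function.support (gradient w) ⊆ tsupport w := by
    intro x hx
    by_contra hxn
    apply hx
    have hev : w =ᶠ[nhds x] (fun _ => (0:ℝ)) := by
      filter_upwards [(isClosed_tsupport w).isOpen_compl.mem_nhds hxn] with y hy
      exact image_eq_zero_of_notMem_tsupport hy
    rw [hev.gradient_eq]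
    exact gradient_const x 0
  have hgrad_ts : tsupport (gradient w) ⊆ tsupport w :=
    closure_minimal hgrad_supp (isClosed_tsupport w)
  have hgrad_cs : HasCompactSupport (gradient w) :=
    HasCompactSupport.of_support_subset_isCompact hcs hgrad_supp
  -- integrability of the three integrands
  have hκcont : Continuous (fun m : EuclideanSpace ℝ (Fin n) => Matrix.toEuclideanLin κ m) :=
    (Matrix.toEuclideanLin κ).continuous_of_finiteDimensional
  have hs₁ : Function.support (fun m => ‖gradient w m‖ ^ 2) ⊆ tsupport w := by
    intro x hx
    refine hgrad_supp ?_
    simp only [Function.mem_support] at hx ⊢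
    intro h; exact hx (by simp [h])
  have hs₂ : Function.support (fun m : EuclideanSpace ℝ (Fin n) => w m ^ 2) ⊆ tsupport w := by
    intro x hx
    refine subset_closure ?_
    simp only [Function.mem_support] at hx ⊢
    intro h; exact hx (by simp [h])
  have hsc : Function.support
      (fun m => ⟪Matrix.toEuclideanLin κ m, gradient w m⟫ * w m) ⊆ tsupport w := by
    intro x hx
    refine subset_closure ?_
    simp only [Function.mem_support] at hx ⊢
    intro h; exact hx (by simp [h])
  have hi₁ : Integrable (fun m => ‖gradient w m‖ ^ 2 * (b - ‖m‖ ^ 2) ^ β) :=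
    aux_integrable hb0 _ ((hgrad_cont.norm).pow 2)
      (HasCompactSupport.of_support_subset_isCompact hcs hs₁)
      ((closure_minimal hs₁ (isClosed_tsupport w)).trans hsupp)
  have hi₂ : Integrable (fun m : EuclideanSpace ℝ (Fin n) => w m ^ 2 * (b - ‖m‖ ^ 2) ^ β) :=
    aux_integrable hb0 _ ((hw.continuous).pow 2)
      (HasCompactSupport.of_support_subset_isCompact hcs hs₂)
      ((closure_minimal hs₂ (isClosed_tsupport w)).trans hsupp)
  have hic : Integrable
      (fun m => ⟪Matrix.toEuclideanLin κ m, gradient w m⟫ * w m * (b - ‖m‖ ^ 2) ^ β) :=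
    aux_integrable hb0 _
      ((continuous_inner.comp (hκcont.prodMk hgrad_cont)).mul hw.continuous)
      (HasCompactSupport.of_support_subset_isCompact hcs hsc)
      ((closure_minimal hsc (isClosed_tsupport w)).trans hsupp)
  have hio₁ := hi₁.integrableOn (s := B)
  have hio₂ := hi₂.integrableOn (s := B)
  have hioc := hic.integrableOn (s := B)
  -- split the first integral
  have hsplit : (∫ m in B, (‖gradient w m‖ ^ 2 + w m ^ 2) * (b - ‖m‖ ^ 2) ^ β)
      = (∫ m in B, ‖gradient w m‖ ^ 2 * (b - ‖m‖ ^ 2) ^ β)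
        + (∫ m in B, w m ^ 2 * (b - ‖m‖ ^ 2) ^ β) := by
    rw [← integral_add hio₁ hio₂]
    congr 1
    ext m
    ring
  rw [hsplit]
  set A := ∫ m in B, ‖gradient w m‖ ^ 2 * (b - ‖m‖ ^ 2) ^ β with hA
  set Bi := ∫ m in B, w m ^ 2 * (b - ‖m‖ ^ 2) ^ β with hBi
  set Ci := ∫ m in B, ⟪Matrix.toEuclideanLin κ m, gradient w m⟫ * w m * (b - ‖m‖ ^ 2) ^ β
    with hCi
  -- key nonneg integral
  have key : 0 ≤ (1/4 : ℝ) * A + Ci + (M^2 * b + 3/4) * Bi := by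
    have heq : (1/4 : ℝ) * A + Ci + (M^2 * b + 3/4) * Bi
        = ∫ m in B, ((1/4 : ℝ) * (‖gradient w m‖ ^ 2 * (b - ‖m‖ ^ 2) ^ β)
            + ⟪Matrix.toEuclideanLin κ m, gradient w m⟫ * w m * (b - ‖m‖ ^ 2) ^ β
            + (M^2 * b + 3/4) * (w m ^ 2 * (b - ‖m‖ ^ 2) ^ β)) := by
      have hg₁ : IntegrableOn
          (fun m => (1/4 : ℝ) * (‖gradient w m‖ ^ 2 * (b - ‖m‖ ^ 2) ^ β)) B := by
        exact hio₁.const_mul _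
      have hg₃ : IntegrableOn
          (fun m => (M^2 * b + 3/4) * (w m ^ 2 * (b - ‖m‖ ^ 2) ^ β)) B := by
        exact hio₂.const_mul _
      have hg₁₂ : IntegrableOn
          (fun m => (1/4 : ℝ) * (‖gradient w m‖ ^ 2 * (b - ‖m‖ ^ 2) ^ β)
            + ⟪Matrix.toEuclideanLin κ m, gradient w m⟫ * w m * (b - ‖m‖ ^ 2) ^ β) B := by
        exact hg₁.add hioc
      rw [integral_add hg₁₂ hg₃, integral_add hg₁ hioc, integral_const_mul, integral_const_mul]
    rw [heq]
    apply setIntegral_nonneg measurableSet_ball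
    intro x hx
    have hxlt : ‖x‖ < Real.sqrt b := by simpa [hBdef] using hx
    have hρ : 0 < b - ‖x‖ ^ 2 := by
      nlinarith [Real.sq_sqrt hb0.le, norm_nonneg x, Real.sqrt_nonneg b]
    have hρβ : 0 < (b - ‖x‖ ^ 2) ^ β := Real.rpow_pos_of_pos hρ β
    set a := ‖gradient w x‖ with ha
    set c := |w x| with hc
    have hbound : |⟪Matrix.toEuclideanLin κ x, gradient w x⟫ * w x|
        ≤ M * Real.sqrt b * (a * c) := by
      have h1 : |⟪Matrix.toEuclideanLin κ x, gradient w x⟫|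
          ≤ ‖Matrix.toEuclideanLin κ x‖ * a := abs_real_inner_le_norm _ _
      have h2 : ‖Matrix.toEuclideanLin κ x‖ ≤ M * Real.sqrt b := by
        have he : Matrix.toEuclideanLin κ x = Matrix.toEuclideanCLM (𝕜 := ℝ) κ x := by
          rw [← Matrix.coe_toEuclideanCLM_eq_toEuclideanLin]; rfl
        rw [he]
        calc ‖Matrix.toEuclideanCLM (𝕜 := ℝ) κ x‖
            ≤ ‖Matrix.toEuclideanCLM (𝕜 := ℝ) κ‖ * ‖x‖ :=
              (Matrix.toEuclideanCLM (𝕜 := ℝ) κ).le_opNorm x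
          _ ≤ M * Real.sqrt b := by
              apply mul_le_mul hκ hxlt.le (norm_nonneg x) hM
      calc |⟪Matrix.toEuclideanLin κ x, gradient w x⟫ * w x|
          = |⟪Matrix.toEuclideanLin κ x, gradient w x⟫| * c := abs_mul _ _
        _ ≤ (‖Matrix.toEuclideanLin κ x‖ * a) * c := by
            apply mul_le_mul_of_nonneg_right h1 (abs_nonneg _)
        _ ≤ (M * Real.sqrt b * a) * c :=
            mul_le_mul_of_nonneg_right
              (mul_le_mul_of_nonneg_right h2 (norm_nonneg _)) (abs_nonneg _)
        _ = M * Real.sqrt b * (a * c) := by ring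
    have hfclb : -(M * Real.sqrt b * (a * c)) ≤ ⟪Matrix.toEuclideanLin κ x, gradient w x⟫ * w x :=
      (neg_le_neg hbound).trans (neg_abs_le _)
    have hsq : Real.sqrt b ^ 2 = b := Real.sq_sqrt hb0.le
    have hMsc : (M * Real.sqrt b * c)^2 = M^2 * b * c^2 := by
      rw [mul_pow, mul_pow, hsq]
    have hamgm : M * Real.sqrt b * (a * c) ≤ (1/4) * a^2 + M^2 * b * c^2 := by
      nlinarith [sq_nonneg (a/2 - M * Real.sqrt b * c), hMsc]
    have hw2 : w x ^ 2 = c ^ 2 := (sq_abs _).symm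
    have hptwise : 0 ≤ (1/4 : ℝ) * ‖gradient w x‖ ^ 2
        + ⟪Matrix.toEuclideanLin κ x, gradient w x⟫ * w x + (M^2 * b + 3/4) * (w x ^ 2) := by
      rw [hw2, ← ha]
      generalize ⟪Matrix.toEuclideanLin κ x, gradient w x⟫ * w x = I at hfclb ⊢
      linarith [hamgm, hfclb, sq_nonneg c]
    have hfin : (1/4 : ℝ) * (‖gradient w x‖ ^ 2 * (b - ‖x‖ ^ 2) ^ β)
        + ⟪Matrix.toEuclideanLin κ x, gradient w x⟫ * w x * (b - ‖x‖ ^ 2) ^ β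
        + (M^2 * b + 3/4) * (w x ^ 2 * (b - ‖x‖ ^ 2) ^ β)
        = ((1/4 : ℝ) * ‖gradient w x‖ ^ 2
            + ⟪Matrix.toEuclideanLin κ x, gradient w x⟫ * w x
            + (M^2 * b + 3/4) * (w x ^ 2)) * (b - ‖x‖ ^ 2) ^ β := by ring
    rw [hfin]
    exact mul_nonneg hptwise hρβ.le
  linarith
end

section
/- Let γ ≤ 1. For every smooth function u : ℝⁿ → ℝ with compact support contained in B, ∫_B m·∇(u²)(m) ρ(m)^{γ−1} dm = −∫_B u(m)² ( n ρ(m)^{γ−1} + 2(1−γ) ‖m‖² ρ(m)^{γ−2} ) dm, and in particular ∫_B m·∇(u²)(m) ρ(m)^{γ−1} dm ≤ 0. -/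
open MeasureTheory
open scoped RealInnerProductSpace

noncomputable def radialPsi (ε γ : ℝ) : ℝ → ℝ :=
  fun t => Real.smoothTransition ((2 * t - ε) / ε) * t ^ (γ - 1)

lemma radialPsi_contDiff {ε : ℝ} (hε : 0 < ε) (γ : ℝ) : ContDiff ℝ 1 (radialPsi ε γ) := by
  rw [contDiff_iff_contDiffAt]
  intro t
  rcases lt_or_ge 0 t with ht | ht
  · exact (Real.smoothTransition.contDiff.contDiffAt.comp t
      (((contDiff_const.mul contDiff_id).sub contDiff_const).div_const ε).contDiffAt).mul
      (Real.contDiffAt_rpow_const_of_ne ht.ne')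
  · have hmem : Set.Iio (ε / 2) ∈ nhds t := Iio_mem_nhds (lt_of_le_of_lt ht (by linarith))
    apply contDiffAt_const (c := 0) |>.congr_of_eventuallyEq
    filter_upwards [hmem] with s hs
    have : (2 * s - ε) / ε ≤ 0 := by
      apply div_nonpos_of_nonpos_of_nonneg _ hε.le
      simp only [Set.mem_Iio] at hs; linarith
    simp [radialPsi, Real.smoothTransition.zero_of_nonpos this]

lemma radialPsi_eq {ε : ℝ} (hε : 0 < ε) (γ : ℝ) {t : ℝ} (ht : ε ≤ t) :
    radialPsi ε γ t = t ^ (γ - 1) := by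
  have : (1:ℝ) ≤ (2 * t - ε) / ε := (le_div_iff₀ hε).2 (by linarith)
  simp [radialPsi, Real.smoothTransition.one_of_one_le this]

lemma hasFDerivAt_radial_rho {n : ℕ} (b : ℝ) (x : EuclideanSpace ℝ (Fin n)) :
    HasFDerivAt (fun y : EuclideanSpace ℝ (Fin n) => b - ‖y‖ ^ 2) (-(2 • innerSL ℝ x)) x := by
  have := (hasFDerivAt_id x).norm_sq
  simpa using this.const_sub b

lemma hasFDerivAt_radial_Gi {n : ℕ} (b γ : ℝ) (i : Fin n) (x : EuclideanSpace ℝ (Fin n))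
    (hρ : b - ‖x‖ ^ 2 ≠ 0) :
    HasFDerivAt (fun y : EuclideanSpace ℝ (Fin n) => y i * (b - ‖y‖ ^ 2) ^ (γ - 1))
      (x i • (((γ - 1) * (b - ‖x‖ ^ 2) ^ (γ - 1 - 1)) • (-(2 • innerSL ℝ x)))
        + ((b - ‖x‖ ^ 2) ^ (γ - 1)) •
            (EuclideanSpace.proj i : EuclideanSpace ℝ (Fin n) →L[ℝ] ℝ)) x := by
  have h1 := hasFDerivAt_radial_rho b x
  have h2 : HasDerivAt (fun t : ℝ => t ^ (γ - 1)) ((γ - 1) * (b - ‖x‖ ^ 2) ^ (γ - 1 - 1))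
      (b - ‖x‖ ^ 2) := Real.hasDerivAt_rpow_const (Or.inl hρ)
  have h3 := h2.comp_hasFDerivAt x h1
  have h4 : HasFDerivAt (fun y : EuclideanSpace ℝ (Fin n) => y i)
      (EuclideanSpace.proj i : EuclideanSpace ℝ (Fin n) →L[ℝ] ℝ) x :=
    (ContinuousLinearMap.hasFDerivAt _).congr_of_eventuallyEq
      (Filter.Eventually.of_forall fun y => rfl)
  exact h4.mul h3


set_option maxHeartbeats 1000000 in
/-- For `γ ≤ 1` and every smooth `u` compactly supported in the ball `B = B(0, √b)`,
with `ρ(m) = b − ‖m‖²`: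
`∫_B m·∇(u²) ρ^{γ−1} = −∫_B u² (n ρ^{γ−1} + 2(1−γ)‖m‖² ρ^{γ−2})`, and in particular
`∫_B m·∇(u²) ρ^{γ−1} ≤ 0`. -/
theorem radial_gradient_identity
    (n : ℕ) (hn : 1 ≤ n) (b : ℝ) (hb : 0 < b) (γ : ℝ) (hγ : γ ≤ 1)
    (u : EuclideanSpace ℝ (Fin n) → ℝ)
    (hu : ContDiff ℝ (⊤ : ℕ∞) u) (hcs : HasCompactSupport u)
    (hsupp : tsupport u ⊆ Metric.ball (0 : EuclideanSpace ℝ (Fin n)) (Real.sqrt b)) :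
    (∫ m in Metric.ball (0 : EuclideanSpace ℝ (Fin n)) (Real.sqrt b),
        ⟪m, gradient (fun x => u x ^ 2) m⟫ * (b - ‖m‖ ^ 2) ^ (γ - 1))
      = -∫ m in Metric.ball (0 : EuclideanSpace ℝ (Fin n)) (Real.sqrt b),
          u m ^ 2 * ((n : ℝ) * (b - ‖m‖ ^ 2) ^ (γ - 1)
            + 2 * (1 - γ) * ‖m‖ ^ 2 * (b - ‖m‖ ^ 2) ^ (γ - 2)) ∧
    (∫ m in Metric.ball (0 : EuclideanSpace ℝ (Fin n)) (Real.sqrt b),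
        ⟪m, gradient (fun x => u x ^ 2) m⟫ * (b - ‖m‖ ^ 2) ^ (γ - 1)) ≤ 0 := by
  classical
  obtain ⟨r, hr, hKr⟩ :=
    exists_pos_lt_subset_ball (Real.sqrt_pos.2 hb) (isClosed_tsupport u) hsupp
  obtain ⟨hr0, hrlt⟩ := hr
  have hsq : Real.sqrt b ^ 2 = b := Real.sq_sqrt hb.le
  have hr2 : r ^ 2 < b := by nlinarith [Real.sqrt_nonneg b]
  set ε : ℝ := b - r ^ 2 with hεdef
  have hε : 0 < ε := by simp [hεdef]; linarith
  set f : EuclideanSpace ℝ (Fin n) → ℝ := fun x => u x ^ 2 with hfdef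
  have hf : ContDiff ℝ 1 f := (hu.pow 2).of_le (by simp)
  have hfc : HasCompactSupport f := hcs.comp_left (g := fun y : ℝ => y ^ 2) (by simp)
  have hKf : tsupport f ⊆ tsupport u := by
    apply closure_mono
    intro x hx
    simp only [Function.mem_support, hfdef] at hx ⊢
    exact fun h => hx (by simp [h])
  set U : Set (EuclideanSpace ℝ (Fin n)) := {x | ε < b - ‖x‖ ^ 2} with hUdef
  have hUopen : IsOpen U :=
    isOpen_lt continuous_const (continuous_const.sub (continuous_norm.pow 2))
  have hKU : tsupport u ⊆ U := by
    intro x hx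
    have hxr : ‖x‖ < r := by simpa using hKr hx
    have : ‖x‖ ^ 2 < r ^ 2 := by nlinarith [norm_nonneg x]
    simp only [hUdef, Set.mem_setOf_eq, hεdef]
    linarith
  set φ : EuclideanSpace ℝ (Fin n) → ℝ := fun m => radialPsi ε γ (b - ‖m‖ ^ 2) with hφdef
  have hφ : ContDiff ℝ 1 φ :=
    (radialPsi_contDiff hε γ).comp (contDiff_const.sub (contDiff_norm_sq ℝ))
  set G : Fin n → EuclideanSpace ℝ (Fin n) → ℝ :=
    fun i m => (EuclideanSpace.proj (𝕜 := ℝ) i) m * φ m with hGdef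
  have hG : ∀ i, ContDiff ℝ 1 (G i) := fun i => ((EuclideanSpace.proj i).contDiff).mul hφ
  set v : Fin n → EuclideanSpace ℝ (Fin n) := fun i => EuclideanSpace.single i (1:ℝ) with hvdef
  -- integrability
  have hfd_cont : ∀ i, Continuous (fun x => fderiv ℝ f x (v i)) := fun i =>
    (hf.continuous_fderiv one_ne_zero).clm_apply continuous_const
  have hGd_cont : ∀ i, Continuous (fun x => fderiv ℝ (G i) x (v i)) := fun i =>
    ((hG i).continuous_fderiv one_ne_zero).clm_apply continuous_const
  have i1 : ∀ i, Integrable (fun x => fderiv ℝ f x (v i) * G i x) := by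
    intro i
    apply Continuous.integrable_of_hasCompactSupport
      ((hfd_cont i).mul (hG i).continuous)
    exact (hfc.fderiv_apply ℝ (v i)).mul_right
  have i2 : ∀ i, Integrable (fun x => f x * fderiv ℝ (G i) x (v i)) := by
    intro i
    exact Continuous.integrable_of_hasCompactSupport
      (hf.continuous.mul (hGd_cont i)) hfc.mul_right
  have i3 : ∀ i, Integrable (fun x => f x * G i x) := fun i =>
    Continuous.integrable_of_hasCompactSupport
      (hf.continuous.mul (hG i).continuous) hfc.mul_right
  have hIBP : ∀ i, ∫ x, f x * fderiv ℝ (G i) x (v i) = -∫ x, fderiv ℝ f x (v i) * G i x :=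
    fun i => integral_mul_fderiv_eq_neg_fderiv_mul_of_integrable (i1 i) (i2 i) (i3 i)
      (fun x _ => hf.differentiable one_ne_zero x) (fun x _ => (hG i).differentiable one_ne_zero x)
  have hsum : ∫ x, (∑ i, f x * fderiv ℝ (G i) x (v i))
      = -∫ x, (∑ i, fderiv ℝ f x (v i) * G i x) := by
    rw [integral_finset_sum _ (fun i _ => i2 i), integral_finset_sum _ (fun i _ => i1 i)]
    simp_rw [hIBP]
    rw [Finset.sum_neg_distrib]
  -- fderiv of f vanishes off tsupport u
  have hfd0 : ∀ x, x ∉ tsupport u → fderiv ℝ f x = 0 := by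
    intro x hx
    by_contra h
    exact hx (hKf (tsupport_fderiv_subset ℝ (subset_closure (by exact h))))
  have hgrad : ∀ x, ⟪x, gradient f x⟫ = fderiv ℝ f x x := by
    intro x
    rw [real_inner_comm]
    exact InnerProductSpace.toDual_symm_apply
  -- pointwise identity A
  have hA : ∀ x, (∑ i, fderiv ℝ f x (v i) * G i x)
      = ⟪x, gradient f x⟫ * (b - ‖x‖ ^ 2) ^ (γ - 1) := by
    intro x
    by_cases hx : x ∈ U
    · have hφx : φ x = (b - ‖x‖ ^ 2) ^ (γ - 1) := radialPsi_eq hε γ (le_of_lt hx)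
      have hxsum : (∑ i, x i • v i) = x := by
        ext j
        have : (∑ i, x i • v i) j = ∑ i, (x i • v i) j := by
          rw [WithLp.ofLp_sum]; exact Finset.sum_apply j _ _
        rw [this]
        simp [hvdef, EuclideanSpace.single_apply]
      have hLx : ∀ L : EuclideanSpace ℝ (Fin n) →L[ℝ] ℝ, L x = ∑ i, x i * L (v i) := by
        intro L
        conv_lhs => rw [← hxsum]
        rw [map_sum]
        exact Finset.sum_congr rfl fun i _ => by rw [_root_.map_smul]; simp [smul_eq_mul]
      rw [hgrad]
      calc (∑ i, fderiv ℝ f x (v i) * G i x)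
          = (∑ i, x i * fderiv ℝ f x (v i)) * φ x := by
            rw [Finset.sum_mul]; congr 1; ext i; simp [hGdef]; ring
        _ = fderiv ℝ f x x * (b - ‖x‖ ^ 2) ^ (γ - 1) := by
            rw [hφx, hLx (fderiv ℝ f x)]
    · have hx' : x ∉ tsupport u := fun h => hx (hKU h)
      have h0 := hfd0 x hx'
      have : gradient f x = 0 := by
        simp only [gradient, h0, map_zero]
      simp [h0, this]
  -- pointwise identity B
  have hB : ∀ x, f x * (∑ i, fderiv ℝ (G i) x (v i))
      = u x ^ 2 * ((n : ℝ) * (b - ‖x‖ ^ 2) ^ (γ - 1)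
          + 2 * (1 - γ) * ‖x‖ ^ 2 * (b - ‖x‖ ^ 2) ^ (γ - 2)) := by
    intro x
    by_cases hx : x ∈ tsupport u
    · have hxU : x ∈ U := hKU hx
      have hρpos : 0 < b - ‖x‖ ^ 2 := lt_trans hε hxU
      have hfdGi : ∀ i, fderiv ℝ (G i) x (v i)
          = (b - ‖x‖ ^ 2) ^ (γ - 1) - 2 * (γ - 1) * (x i) ^ 2 * (b - ‖x‖ ^ 2) ^ (γ - 2) := by
        intro i
        have hev : (G i) =ᶠ[nhds x]
            fun y : EuclideanSpace ℝ (Fin n) => y i * (b - ‖y‖ ^ 2) ^ (γ - 1) := by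
          filter_upwards [hUopen.mem_nhds hxU] with y hy
          have : ε ≤ b - ‖y‖ ^ 2 := le_of_lt hy
          simp [hGdef, hφdef, radialPsi_eq hε γ this]
        rw [hev.fderiv_eq, (hasFDerivAt_radial_Gi b γ i x hρpos.ne').fderiv]
        have hγ2 : γ - 1 - 1 = γ - 2 := by ring
        simp [hγ2, hvdef, EuclideanSpace.inner_single_right, EuclideanSpace.single_apply]
        ring
      have hnormsq : (∑ i, (x i) ^ 2) = ‖x‖ ^ 2 := by
        rw [EuclideanSpace.norm_eq, Real.sq_sqrt (by positivity)]
        congr 1; ext i; rw [Real.norm_eq_abs, sq_abs]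
      simp_rw [hfdGi]
      rw [Finset.sum_sub_distrib, Finset.sum_const, Finset.card_univ, Fintype.card_fin]
      have : (∑ i, 2 * (γ - 1) * (x i) ^ 2 * (b - ‖x‖ ^ 2) ^ (γ - 2))
          = 2 * (γ - 1) * ‖x‖ ^ 2 * (b - ‖x‖ ^ 2) ^ (γ - 2) := by
        calc (∑ i, 2 * (γ - 1) * (x i) ^ 2 * (b - ‖x‖ ^ 2) ^ (γ - 2))
            = ∑ i, (x i) ^ 2 * (2 * (γ - 1) * (b - ‖x‖ ^ 2) ^ (γ - 2)) :=
              Finset.sum_congr rfl (fun i _ => by ring)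
          _ = (∑ i, (x i) ^ 2) * (2 * (γ - 1) * (b - ‖x‖ ^ 2) ^ (γ - 2)) :=
              (Finset.sum_mul _ _ _).symm
          _ = 2 * (γ - 1) * ‖x‖ ^ 2 * (b - ‖x‖ ^ 2) ^ (γ - 2) := by rw [hnormsq]; ring
      rw [this]
      simp only [hfdef, nsmul_eq_mul]
      ring
    · have hx0 : u x = 0 := image_eq_zero_of_notMem_tsupport hx
      simp [hfdef, hx0]
  -- transfer set integrals to full-space integrals
  have hLset : (∫ m in Metric.ball (0 : EuclideanSpace ℝ (Fin n)) (Real.sqrt b),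
        ⟪m, gradient f m⟫ * (b - ‖m‖ ^ 2) ^ (γ - 1))
      = ∫ m, ⟪m, gradient f m⟫ * (b - ‖m‖ ^ 2) ^ (γ - 1) := by
    apply setIntegral_eq_integral_of_forall_compl_eq_zero
    intro x hx
    have hx' : x ∉ tsupport u := fun h => hx (hsupp h)
    have : gradient f x = 0 := by simp only [gradient, hfd0 x hx', map_zero]
    simp [this]
  have hRset : (∫ m in Metric.ball (0 : EuclideanSpace ℝ (Fin n)) (Real.sqrt b),
        u m ^ 2 * ((n : ℝ) * (b - ‖m‖ ^ 2) ^ (γ - 1)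
          + 2 * (1 - γ) * ‖m‖ ^ 2 * (b - ‖m‖ ^ 2) ^ (γ - 2)))
      = ∫ m, u m ^ 2 * ((n : ℝ) * (b - ‖m‖ ^ 2) ^ (γ - 1)
          + 2 * (1 - γ) * ‖m‖ ^ 2 * (b - ‖m‖ ^ 2) ^ (γ - 2)) := by
    apply setIntegral_eq_integral_of_forall_compl_eq_zero
    intro x hx
    have hx' : x ∉ tsupport u := fun h => hx (hsupp h)
    simp [image_eq_zero_of_notMem_tsupport hx']
  have key : (∫ m in Metric.ball (0 : EuclideanSpace ℝ (Fin n)) (Real.sqrt b),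
        ⟪m, gradient f m⟫ * (b - ‖m‖ ^ 2) ^ (γ - 1))
      = -∫ m in Metric.ball (0 : EuclideanSpace ℝ (Fin n)) (Real.sqrt b),
          u m ^ 2 * ((n : ℝ) * (b - ‖m‖ ^ 2) ^ (γ - 1)
            + 2 * (1 - γ) * ‖m‖ ^ 2 * (b - ‖m‖ ^ 2) ^ (γ - 2)) := by
    rw [hLset, hRset]
    have e1 : (fun m : EuclideanSpace ℝ (Fin n) =>
        ⟪m, gradient f m⟫ * (b - ‖m‖ ^ 2) ^ (γ - 1))
        = fun x => (∑ i, fderiv ℝ f x (v i) * G i x) := funext fun x => (hA x).symm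
    have e2 : (fun m : EuclideanSpace ℝ (Fin n) =>
        u m ^ 2 * ((n : ℝ) * (b - ‖m‖ ^ 2) ^ (γ - 1)
          + 2 * (1 - γ) * ‖m‖ ^ 2 * (b - ‖m‖ ^ 2) ^ (γ - 2)))
        = fun x => f x * (∑ i, fderiv ℝ (G i) x (v i)) := funext fun x => (hB x).symm
    rw [e1, e2]
    simp_rw [← Finset.mul_sum] at hsum
    linarith [hsum]
  refine ⟨key, ?_⟩
  rw [key]
  apply neg_nonpos_of_nonneg
  apply setIntegral_nonneg measurableSet_ball
  intro x hx
  have hρ : 0 ≤ b - ‖x‖ ^ 2 := by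
    have : ‖x‖ < Real.sqrt b := by simpa using hx
    nlinarith [norm_nonneg x, Real.sqrt_nonneg b]
  have h1 : (0:ℝ) ≤ (b - ‖x‖ ^ 2) ^ (γ - 1) := Real.rpow_nonneg hρ _
  have h2 : (0:ℝ) ≤ (b - ‖x‖ ^ 2) ^ (γ - 2) := Real.rpow_nonneg hρ _
  have h3 : (0:ℝ) ≤ 1 - γ := by linarith
  positivity
end

section
/- Assume b > 2, set β = 2 − b/2, and let γ satisfy max{β, −1} < γ < 1. Let M ≥ 0. There exist constants C₁' > 0 and C₂' > 0, depending only on n, b, γ and M, such that for every n×n real matrix κ with operator norm at most M and every smooth function u : ℝⁿ → ℝ with compact support contained in B, C₁' ∫_B (‖∇u‖² + u²) ρ^γ dm ≤ (1/2)∫_B ‖∇u‖² ρ^γ dm + (β−γ)∫_B (m·∇u(m)) u(m) ρ(m)^{γ−1} dm + ∫_B ((κm)·∇u(m)) u(m) ρ(m)^γ dm + C₂' ∫_B u² ρ^γ dm. -/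
open MeasureTheory
open scoped RealInnerProductSpace

open Metric Set

namespace CoercivityAuxNU

/-- Local-to-global continuity: continuous on an open set, zero outside a closed subset. -/
lemma cont_of_local {E F : Type*} [TopologicalSpace E] [TopologicalSpace F]
    {U K : Set E} (hU : IsOpen U) (hK : IsClosed K) (hKU : K ⊆ U) {f : E → F} {z : F}
    (h0 : ∀ x ∉ K, f x = z) (hc : ContinuousOn f U) : Continuous f := by
  rw [continuous_iff_continuousAt]
  intro x
  by_cases hx : x ∈ U
  · exact hc.continuousAt (hU.mem_nhds hx)
  · have hxK : x ∉ K := fun h => hx (hKU h)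
    have hev : f =ᶠ[nhds x] fun _ => z := by
      filter_upwards [hK.isOpen_compl.mem_nhds hxK] with y hy using h0 y hy
    exact hev.continuousAt

variable {n : ℕ} {b γ : ℝ} {u : EuclideanSpace ℝ (Fin n) → ℝ}

local notation "𝔼" => EuclideanSpace ℝ (Fin n)
local notation "B" => Metric.ball (0 : EuclideanSpace ℝ (Fin n)) (Real.sqrt b)

lemma rho_pos (hb0 : 0 < b) {x : 𝔼} (hx : x ∈ B) : 0 < b - ‖x‖ ^ 2 := by
  have h1 : ‖x‖ < Real.sqrt b := by simpa using mem_ball_iff_norm.1 hx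
  have h2 : ‖x‖ ^ 2 < Real.sqrt b ^ 2 :=
    pow_lt_pow_left₀ h1 (norm_nonneg x) (by norm_num)
  have := Real.sq_sqrt hb0.le
  nlinarith

lemma rho_hasFDerivAt (x : 𝔼) :
    HasFDerivAt (fun m : 𝔼 => b - ‖m‖ ^ 2) ((-2 : ℝ) • (innerSL ℝ x)) x := by
  have h1 : HasFDerivAt (fun m : 𝔼 => ‖m‖ ^ 2) ((2:ℕ) • (innerSL ℝ x)) x := by
    simpa using (hasFDerivAt_id x).norm_sq
  have := (hasFDerivAt_const b x).sub h1
  have h2 : ((-2 : ℝ) • (innerSL ℝ x)) = 0 - (2:ℕ) • (innerSL ℝ x) := by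
    ext v
    simp <;> ring
  rw [h2]
  exact this

lemma rho_contOn (c : ℝ) (hb0 : 0 < b) :
    ContinuousOn (fun m : 𝔼 => (b - ‖m‖ ^ 2) ^ c) B := by
  apply ContinuousOn.rpow_const
  · exact (continuous_const.sub ((continuous_norm).pow 2)).continuousOn
  · exact fun x hx => Or.inl (ne_of_gt (rho_pos hb0 hx))

section Main

variable (hb0 : 0 < b) (hu : ContDiff ℝ (⊤ : ℕ∞) u) (hcs : HasCompactSupport u)
  (hsupp : tsupport u ⊆ Metric.ball (0 : EuclideanSpace ℝ (Fin n)) (Real.sqrt b))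

include hcs hsupp in
/-- Integrability helper. -/
lemma integr_aux {f : 𝔼 → ℝ} (h0 : ∀ x ∉ tsupport u, f x = 0)
    (hc : ContinuousOn f B) : Integrable f := by
  have hcont : Continuous f :=
    cont_of_local Metric.isOpen_ball (isClosed_tsupport u) hsupp h0 hc
  have hcsf : HasCompactSupport f := HasCompactSupport.intro hcs h0
  exact hcont.integrable_of_hasCompactSupport hcsf

include hb0 hu hcs hsupp

set_option maxHeartbeats 1000000 in
/-- The key integration-by-parts inequality:
`∫_B ⟪x,∇u⟫ u ρ^{γ-1} ≤ 0` when `γ ≤ 1`. -/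
lemma key_ineq (hγ : γ ≤ 1) :
    ∫ x in B, ⟪x, gradient u x⟫ * u x * (b - ‖x‖ ^ 2) ^ (γ - 1) ≤ 0 := by
  classical
  set ρ : 𝔼 → ℝ := fun m => b - ‖m‖ ^ 2 with hρdef
  set w : 𝔼 → ℝ := fun m => u m ^ 2 * ρ m ^ (γ - 1) with hwdef
  set w' : 𝔼 → (𝔼 →L[ℝ] ℝ) := fun x =>
    (2 * u x * ρ x ^ (γ - 1)) • fderiv ℝ u x
      + ((γ - 1) * ρ x ^ (γ - 2) * u x ^ 2) • ((-2 : ℝ) • (innerSL ℝ x)) with hw'def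
  have hudiff : Differentiable ℝ u := hu.differentiable (by simp)
  have hfc : Continuous (fderiv ℝ u) := hu.continuous_fderiv (by simp)
  have hgrad_eq : ∀ x : 𝔼, ⟪x, gradient u x⟫ = fderiv ℝ u x x := by
    intro x
    rw [real_inner_comm]
    exact InnerProductSpace.toDual_symm_apply
  have hu0 : ∀ x ∉ tsupport u, u x = 0 := fun x hx => image_eq_zero_of_notMem_tsupport hx
  -- w' vanishes off the support
  have hw'0 : ∀ x ∉ tsupport u, w' x = 0 := by
    intro x hx
    simp [hw'def, hu0 x hx]
  have hw0 : ∀ x ∉ tsupport u, w x = 0 := by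
    intro x hx
    simp [hwdef, hu0 x hx]
  -- w has derivative w'
  have hw : ∀ x : 𝔼, HasFDerivAt w (w' x) x := by
    intro x
    by_cases hx : x ∈ B
    · have hρx : (0:ℝ) < ρ x := rho_pos hb0 hx
      have h1 : HasFDerivAt (fun m : 𝔼 => ρ m ^ (γ - 1))
          (((γ - 1) * ρ x ^ (γ - 1 - 1)) • ((-2 : ℝ) • (innerSL ℝ x))) x :=
        (rho_hasFDerivAt x).rpow_const (Or.inl (ne_of_gt hρx))
      have h2 : HasFDerivAt (fun m : 𝔼 => u m ^ 2)
          ((2 * u x) • fderiv ℝ u x) x := by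
        have h := ((hudiff x).hasFDerivAt).mul ((hudiff x).hasFDerivAt)
        have heq : (u * u) = fun m => u m ^ 2 := by
          funext m; simp [sq]
        rw [heq] at h
        refine h.congr_fderiv ?_
        ext v
        simp only [ContinuousLinearMap.add_apply, ContinuousLinearMap.smul_apply, smul_eq_mul]
        ring
      have h3 := h2.mul h1
      have hexp : γ - 1 - 1 = γ - 2 := by ring
      rw [hexp] at h3
      refine h3.congr_fderiv ?_
      ext v
      simp only [hw'def, ContinuousLinearMap.add_apply, ContinuousLinearMap.smul_apply,
        ContinuousLinearMap.neg_apply, smul_eq_mul, ContinuousLinearMap.coe_smul',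
        Pi.smul_apply]
      ring
    · have hxK : x ∉ tsupport u := fun h => hx (hsupp h)
      have hev : w =ᶠ[nhds x] fun _ => 0 := by
        filter_upwards [(isClosed_tsupport u).isOpen_compl.mem_nhds hxK] with y hy
        simp [hwdef, hu0 y hy]
      rw [hw'0 x hxK]
      exact (hasFDerivAt_const (0:ℝ) x).congr_of_eventuallyEq hev
  -- continuity of w and w'
  have hwcont : Continuous w := by
    refine cont_of_local isOpen_ball (isClosed_tsupport u) hsupp hw0 ?_
    exact ((hu.continuous.pow 2).continuousOn).mul (rho_contOn _ hb0)
  have hw'cont : Continuous w' := by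
    refine cont_of_local isOpen_ball (isClosed_tsupport u) hsupp hw'0 ?_
    apply ContinuousOn.add
    · exact (((continuous_const.mul hu.continuous).continuousOn.mul
        (rho_contOn _ hb0)).smul hfc.continuousOn)
    · refine ContinuousOn.smul (f := fun x => (γ - 1) * ρ x ^ (γ - 2) * u x ^ 2)
        (g := fun x => (-2 : ℝ) • innerSL ℝ x) ?_ ?_
      · exact (continuous_const.continuousOn.mul (rho_contOn _ hb0)).mul
          ((hu.continuous.pow 2).continuousOn)
      · exact ((continuous_const : Continuous fun _ : 𝔼 => (-2 : ℝ)).smul ((innerSL ℝ (E := EuclideanSpace ℝ (Fin n))).continuous)).continuousOn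
  -- coordinate basis vectors
  set e : Fin n → 𝔼 := fun i => EuclideanSpace.single i (1:ℝ) with hedef
  have hsum_single : ∀ x : 𝔼, ∑ i, x i • e i = x := by
    intro x
    ext j
    simp [hedef, EuclideanSpace.single_apply, Pi.single_apply]
  have hcoord : ∀ i : Fin n, Continuous (fun m : 𝔼 => m i) := by
    intro i
    exact (EuclideanSpace.proj (𝕜 := ℝ) i).continuous
  -- the integral of each line derivative vanishes
  have hline : ∀ i : Fin n, ∫ x : 𝔼, (w x + x i * (w' x (e i))) = 0 := by
    intro i
    set g : 𝔼 → ℝ := fun m => w m * m i with hgdef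
    have hgder : ∀ x : 𝔼, HasFDerivAt g
        (w x • (EuclideanSpace.proj (𝕜 := ℝ) i) + x i • w' x) x := by
      intro x
      exact (hw x).mul (EuclideanSpace.proj (𝕜 := ℝ) i).hasFDerivAt
    have hg0 : ∀ x ∉ tsupport u, g x = 0 := by
      intro x hx; simp [hgdef, hw0 x hx]
    have hgcs : HasCompactSupport g := HasCompactSupport.intro hcs hg0
    have hG : Continuous (fun x : 𝔼 =>
        w x • (EuclideanSpace.proj (𝕜 := ℝ) i) + x i • w' x) :=
      (hwcont.smul continuous_const).add ((hcoord i).smul hw'cont)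
    have hGcs : HasCompactSupport (fun x : 𝔼 =>
        w x • (EuclideanSpace.proj (𝕜 := ℝ) i) + x i • w' x) := by
      apply HasCompactSupport.intro hcs
      intro x hx
      simp [hw0 x hx, hw'0 x hx]
    obtain ⟨C, hC⟩ := hGcs.exists_bound_of_continuous hG
    have hglip : LipschitzWith (Real.toNNReal (max C 0)) g := by
      apply lipschitzWith_of_nnnorm_fderiv_le (fun x => (hgder x).differentiableAt)
      intro x
      have hx := hC x
      rw [← (hgder x).fderiv] at hx
      rw [← NNReal.coe_le_coe, coe_nnnorm, Real.coe_toNNReal _ (le_max_right _ _)]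
      exact hx.trans (le_max_left _ _)
    have H := LipschitzWith.integral_lineDeriv_mul_eq (μ := volume)
      (LipschitzWith.const (1:ℝ)) hglip hgcs (-(e i))
    have hl0 : ∀ (x v : 𝔼), lineDeriv ℝ (fun _ : 𝔼 => (1:ℝ)) x v = 0 := by
      intro x v; simp [lineDeriv, deriv_const]
    simp only [hl0, zero_mul, integral_zero, mul_one, neg_neg] at H
    have hld : ∀ x : 𝔼, lineDeriv ℝ g x (e i) = w x + x i * (w' x (e i)) := by
      intro x
      rw [((hgder x).hasLineDerivAt (e i)).lineDeriv]
      simp [hedef, EuclideanSpace.single_apply, mul_comm]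
    rw [show (fun x : 𝔼 => w x + x i * (w' x (e i)))
        = fun x => lineDeriv ℝ g x (e i) from funext fun x => (hld x).symm]
    exact H.symm
  -- integrability of each summand
  have hint : ∀ i : Fin n, Integrable (fun x : 𝔼 => w x + x i * (w' x (e i))) := by
    intro i
    have happ : Continuous (fun x : 𝔼 => w' x (e i)) :=
      (ContinuousLinearMap.apply ℝ ℝ (e i)).continuous.comp hw'cont
    have hcont : Continuous (fun x : 𝔼 => w x + x i * (w' x (e i))) :=
      hwcont.add ((hcoord i).mul happ)
    apply hcont.integrable_of_hasCompactSupport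
    apply HasCompactSupport.intro hcs
    intro x hx
    simp [hw0 x hx, hw'0 x hx]
  -- the divergence theorem
  have hdiv : ∫ x : 𝔼, ((n:ℝ) * w x + w' x x) = 0 := by
    have hs : ∀ x : 𝔼, ((n:ℝ) * w x + w' x x) = ∑ i, (w x + x i * (w' x (e i))) := by
      intro x
      rw [Finset.sum_add_distrib, Finset.sum_const, Finset.card_univ, Fintype.card_fin]
      have h1 : ∑ i, x i * (w' x (e i)) = w' x x := by
        have : ∀ i : Fin n, x i * (w' x (e i)) = w' x (x i • e i) := by
          intro i; simp
        rw [Finset.sum_congr rfl (fun i _ => this i), ← map_sum, hsum_single]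
      rw [h1, nsmul_eq_mul]
    rw [show (fun x : 𝔼 => (n:ℝ) * w x + w' x x)
        = fun x => ∑ i, (w x + x i * (w' x (e i))) from funext hs]
    rw [integral_finset_sum Finset.univ (fun i _ => hint i)]
    simp [hline]
  have hdivB : ∫ x in B, ((n:ℝ) * w x + w' x x) = 0 := by
    rw [setIntegral_eq_integral_of_forall_compl_eq_zero]
    · exact hdiv
    · intro x hx
      have hxK : x ∉ tsupport u := fun h => hx (hsupp h)
      simp [hw0 x hxK, hw'0 x hxK]
  -- pointwise form on the ball
  have hcongr : EqOn (fun x : 𝔼 => (n:ℝ) * w x + w' x x)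
      (fun x : 𝔼 => ((n:ℝ) * (u x ^ 2 * (b - ‖x‖ ^ 2) ^ (γ - 1))
        + 2 * (⟪x, gradient u x⟫ * u x * (b - ‖x‖ ^ 2) ^ (γ - 1)))
        - (2 * (γ - 1)) * (‖x‖ ^ 2 * u x ^ 2 * (b - ‖x‖ ^ 2) ^ (γ - 2))) B := by
    intro x _
    have hinner : (innerSL ℝ x) x = ‖x‖ ^ 2 := real_inner_self_eq_norm_sq x
    simp only [hwdef, hw'def, ContinuousLinearMap.add_apply, ContinuousLinearMap.smul_apply,
      ContinuousLinearMap.neg_apply, smul_eq_mul, ContinuousLinearMap.coe_smul', Pi.smul_apply,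
      hinner]
    rw [← hgrad_eq x]
    ring
  rw [setIntegral_congr_fun measurableSet_ball hcongr] at hdivB
  -- integrability of the three pieces
  have hI7 : Integrable (fun x : 𝔼 => u x ^ 2 * (b - ‖x‖ ^ 2) ^ (γ - 1)) := by
    apply integr_aux hcs hsupp
    · intro x hx; simp [hu0 x hx]
    · exact ((hu.continuous.pow 2).continuousOn).mul (rho_contOn _ hb0)
  have hI6 : Integrable (fun x : 𝔼 => ‖x‖ ^ 2 * u x ^ 2 * (b - ‖x‖ ^ 2) ^ (γ - 2)) := by
    apply integr_aux hcs hsupp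
    · intro x hx; simp [hu0 x hx]
    · exact (((continuous_norm.pow 2).mul (hu.continuous.pow 2)).continuousOn).mul
        (rho_contOn _ hb0)
  have hI3 : Integrable (fun x : 𝔼 => ⟪x, gradient u x⟫ * u x * (b - ‖x‖ ^ 2) ^ (γ - 1)) := by
    apply integr_aux hcs hsupp
    · intro x hx; simp [hu0 x hx]
    · have hgradc : Continuous (fun x : 𝔼 => gradient u x) :=
        (LinearIsometryEquiv.continuous _).comp (hu.continuous_fderiv (by simp))
      exact (((continuous_id.inner hgradc).mul hu.continuous).continuousOn).mul
        (rho_contOn _ hb0)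
  rw [integral_sub, integral_add] at hdivB
  · rw [integral_const_mul, integral_const_mul, integral_const_mul] at hdivB
    have hJ' : 0 ≤ ∫ x in B, u x ^ 2 * (b - ‖x‖ ^ 2) ^ (γ - 1) := by
      apply setIntegral_nonneg measurableSet_ball
      intro x hx
      exact mul_nonneg (sq_nonneg _) (Real.rpow_nonneg (rho_pos hb0 hx).le _)
    have hF6 : 0 ≤ ∫ x in B, ‖x‖ ^ 2 * u x ^ 2 * (b - ‖x‖ ^ 2) ^ (γ - 2) := by
      apply setIntegral_nonneg measurableSet_ball
      intro x hx
      exact mul_nonneg (mul_nonneg (sq_nonneg _) (sq_nonneg _))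
        (Real.rpow_nonneg (rho_pos hb0 hx).le _)
    have h1 : 2 * (γ - 1) * (∫ x in B, ‖x‖ ^ 2 * u x ^ 2 * (b - ‖x‖ ^ 2) ^ (γ - 2)) ≤ 0 :=
      mul_nonpos_of_nonpos_of_nonneg (by linarith) hF6
    have h2 : 0 ≤ (n:ℝ) * ∫ x in B, u x ^ 2 * (b - ‖x‖ ^ 2) ^ (γ - 1) :=
      mul_nonneg (Nat.cast_nonneg n) hJ'
    linarith [hdivB]
  · exact (hI7.const_mul _).integrableOn
  · exact (hI3.const_mul _).integrableOn
  · exact ((hI7.const_mul _).integrableOn).add ((hI3.const_mul _).integrableOn)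
  · exact (hI6.const_mul _).integrableOn

end Main
end CoercivityAuxNU

open CoercivityAuxNU

set_option maxHeartbeats 1000000 in
/-- Coercivity estimate for the bilinear form `L₀` of the non-uniqueness construction
(Section 6): with `b > 2`, `β = 2 − b/2`, `max{β, −1} < γ < 1`, `ρ(m) = b − ‖m‖²`,
there are constants `C₁', C₂' > 0` depending only on `n`, `b`, `γ`, `M` such that for
every matrix `κ` of operator norm at most `M` and every smooth `u` compactly supported
in `B = B(0, √b)`,
`C₁' ‖u‖²_{H¹_γ} ≤ (1/2)∫_B ‖∇u‖² ρ^γ + (β−γ)∫_B (m·∇u) u ρ^{γ−1}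
  + ∫_B (κm·∇u) u ρ^γ + C₂' ‖u‖²_{L²_γ}`. -/
theorem coercivity_estimate_nonuniqueness
    (n : ℕ) (hn : 1 ≤ n) (b : ℝ) (hb : 2 < b) (γ : ℝ)
    (hγ₁ : max (2 - b / 2) (-1) < γ) (hγ₂ : γ < 1) (M : ℝ) (hM : 0 ≤ M) :
    ∃ C₁' C₂' : ℝ, 0 < C₁' ∧ 0 < C₂' ∧
      ∀ κ : Matrix (Fin n) (Fin n) ℝ, ‖Matrix.toEuclideanCLM (𝕜 := ℝ) κ‖ ≤ M →
        ∀ u : EuclideanSpace ℝ (Fin n) → ℝ,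
          ContDiff ℝ (⊤ : ℕ∞) u → HasCompactSupport u →
          tsupport u ⊆ Metric.ball (0 : EuclideanSpace ℝ (Fin n)) (Real.sqrt b) →
          C₁' * (∫ m in Metric.ball (0 : EuclideanSpace ℝ (Fin n)) (Real.sqrt b),
                (‖gradient u m‖ ^ 2 + u m ^ 2) * (b - ‖m‖ ^ 2) ^ γ)
            ≤ (1 / 2) * (∫ m in Metric.ball (0 : EuclideanSpace ℝ (Fin n)) (Real.sqrt b),
                  ‖gradient u m‖ ^ 2 * (b - ‖m‖ ^ 2) ^ γ)
              + (2 - b / 2 - γ) * (∫ m in Metric.ball (0 : EuclideanSpace ℝ (Fin n)) (Real.sqrt b),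
                  ⟪m, gradient u m⟫ * u m * (b - ‖m‖ ^ 2) ^ (γ - 1))
              + (∫ m in Metric.ball (0 : EuclideanSpace ℝ (Fin n)) (Real.sqrt b),
                  ⟪Matrix.toEuclideanLin κ m, gradient u m⟫ * u m * (b - ‖m‖ ^ 2) ^ γ)
              + C₂' * ∫ m in Metric.ball (0 : EuclideanSpace ℝ (Fin n)) (Real.sqrt b),
                  u m ^ 2 * (b - ‖m‖ ^ 2) ^ γ := by
  have hb0 : (0:ℝ) < b := by linarith
  refine ⟨1/4, M^2*b + 1/2, by norm_num, by nlinarith [sq_nonneg M], ?_⟩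
  intro κ hκ u hu hcsu hsupp
  have hu0 : ∀ x ∉ tsupport u, u x = 0 := fun x hx => image_eq_zero_of_notMem_tsupport hx
  have hgrad0 : ∀ x ∉ tsupport u, gradient u x = 0 := by
    intro x hx
    have hf : fderiv ℝ u x = 0 := by
      by_contra h'
      exact hx (support_fderiv_subset ℝ (Function.mem_support.2 h'))
    simp [gradient, hf]
  have hgradc : Continuous (fun x : EuclideanSpace ℝ (Fin n) => gradient u x) :=
    (LinearIsometryEquiv.continuous _).comp (hu.continuous_fderiv (by simp))
  have hκcont : Continuous (fun x : EuclideanSpace ℝ (Fin n) => Matrix.toEuclideanLin κ x) :=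
    LinearMap.continuous_of_finiteDimensional _
  -- integrability
  have hI2 : Integrable (fun x : EuclideanSpace ℝ (Fin n) =>
      ‖gradient u x‖ ^ 2 * (b - ‖x‖ ^ 2) ^ γ) := by
    apply integr_aux hcsu hsupp
    · intro x hx; simp [hgrad0 x hx]
    · exact ((hgradc.norm.pow 2).continuousOn).mul (rho_contOn _ hb0)
  have hI5 : Integrable (fun x : EuclideanSpace ℝ (Fin n) =>
      u x ^ 2 * (b - ‖x‖ ^ 2) ^ γ) := by
    apply integr_aux hcsu hsupp
    · intro x hx; simp [hu0 x hx]
    · exact ((hu.continuous.pow 2).continuousOn).mul (rho_contOn _ hb0)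
  have hI4 : Integrable (fun x : EuclideanSpace ℝ (Fin n) =>
      ⟪Matrix.toEuclideanLin κ x, gradient u x⟫ * u x * (b - ‖x‖ ^ 2) ^ γ) := by
    apply integr_aux hcsu hsupp
    · intro x hx; simp [hu0 x hx]
    · exact (((hκcont.inner hgradc).mul hu.continuous).continuousOn).mul (rho_contOn _ hb0)
  have hI9 : Integrable (fun x : EuclideanSpace ℝ (Fin n) =>
      (-((1/4) * ‖gradient u x‖ ^ 2 + M^2*b * u x ^ 2)) * (b - ‖x‖ ^ 2) ^ γ) := by
    apply integr_aux hcsu hsupp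
    · intro x hx; simp [hu0 x hx, hgrad0 x hx]
    · exact ((((continuous_const.mul (hgradc.norm.pow 2)).add
        (continuous_const.mul (hu.continuous.pow 2))).neg.continuousOn).mul (rho_contOn _ hb0))
  -- nonnegativity
  have hI2pos : 0 ≤ ∫ x in Metric.ball (0 : EuclideanSpace ℝ (Fin n)) (Real.sqrt b),
      ‖gradient u x‖ ^ 2 * (b - ‖x‖ ^ 2) ^ γ := by
    apply setIntegral_nonneg measurableSet_ball
    intro x hx
    exact mul_nonneg (sq_nonneg _) (Real.rpow_nonneg (rho_pos hb0 hx).le _)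
  have hI5pos : 0 ≤ ∫ x in Metric.ball (0 : EuclideanSpace ℝ (Fin n)) (Real.sqrt b),
      u x ^ 2 * (b - ‖x‖ ^ 2) ^ γ := by
    apply setIntegral_nonneg measurableSet_ball
    intro x hx
    exact mul_nonneg (sq_nonneg _) (Real.rpow_nonneg (rho_pos hb0 hx).le _)
  -- the sign of the drift term
  have hA : ∫ x in Metric.ball (0 : EuclideanSpace ℝ (Fin n)) (Real.sqrt b),
      ⟪x, gradient u x⟫ * u x * (b - ‖x‖ ^ 2) ^ (γ - 1) ≤ 0 :=
    key_ineq hb0 hu hcsu hsupp hγ₂.le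
  have hβγ : 2 - b / 2 - γ < 0 := by
    have := lt_of_le_of_lt (le_max_left (2 - b / 2) (-1)) hγ₁
    linarith
  have hT1 : 0 ≤ (2 - b / 2 - γ) * ∫ x in Metric.ball (0 : EuclideanSpace ℝ (Fin n)) (Real.sqrt b),
      ⟪x, gradient u x⟫ * u x * (b - ‖x‖ ^ 2) ^ (γ - 1) := by
    have h := mul_nonneg (neg_nonneg.2 hβγ.le) (neg_nonneg.2 hA)
    rwa [neg_mul_neg] at h
  -- the matrix term
  have hκx : ∀ x : EuclideanSpace ℝ (Fin n), ‖Matrix.toEuclideanLin κ x‖ ≤ M * ‖x‖ := by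
    intro x
    have h1 : Matrix.toEuclideanLin κ x = Matrix.toEuclideanCLM (𝕜 := ℝ) κ x := by
      rw [← Matrix.coe_toEuclideanCLM_eq_toEuclideanLin]
      rfl
    rw [h1]
    calc ‖Matrix.toEuclideanCLM (𝕜 := ℝ) κ x‖
        ≤ ‖Matrix.toEuclideanCLM (𝕜 := ℝ) κ‖ * ‖x‖ := ContinuousLinearMap.le_opNorm _ _
      _ ≤ M * ‖x‖ := mul_le_mul_of_nonneg_right hκ (norm_nonneg x)
  have hpt : ∀ x ∈ Metric.ball (0 : EuclideanSpace ℝ (Fin n)) (Real.sqrt b),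
      (-((1/4) * ‖gradient u x‖ ^ 2 + M^2*b * u x ^ 2)) * (b - ‖x‖ ^ 2) ^ γ
        ≤ ⟪Matrix.toEuclideanLin κ x, gradient u x⟫ * u x * (b - ‖x‖ ^ 2) ^ γ := by
    intro x hx
    have hρg : 0 ≤ (b - ‖x‖ ^ 2) ^ γ := Real.rpow_nonneg (rho_pos hb0 hx).le _
    have hxb : ‖x‖ ≤ Real.sqrt b := by
      have := mem_ball_zero_iff.1 hx
      linarith
    have h2 : |⟪Matrix.toEuclideanLin κ x, gradient u x⟫| ≤ M * Real.sqrt b * ‖gradient u x‖ := by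
      calc |⟪Matrix.toEuclideanLin κ x, gradient u x⟫|
          ≤ ‖Matrix.toEuclideanLin κ x‖ * ‖gradient u x‖ := abs_real_inner_le_norm _ _
        _ ≤ (M * ‖x‖) * ‖gradient u x‖ :=
            mul_le_mul_of_nonneg_right (hκx x) (norm_nonneg _)
        _ ≤ M * Real.sqrt b * ‖gradient u x‖ := by
            have : M * ‖x‖ ≤ M * Real.sqrt b := mul_le_mul_of_nonneg_left hxb hM
            exact mul_le_mul_of_nonneg_right this (norm_nonneg _)
    have h3 : -((1/4) * ‖gradient u x‖ ^ 2 + M^2*b * u x ^ 2)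
        ≤ ⟪Matrix.toEuclideanLin κ x, gradient u x⟫ * u x := by
      have habs : -(|⟪Matrix.toEuclideanLin κ x, gradient u x⟫| * |u x|)
          ≤ ⟪Matrix.toEuclideanLin κ x, gradient u x⟫ * u x := by
        have h := neg_abs_le (⟪Matrix.toEuclideanLin κ x, gradient u x⟫ * u x)
        rwa [abs_mul] at h
      have hmul : |⟪Matrix.toEuclideanLin κ x, gradient u x⟫| * |u x|
          ≤ (M * Real.sqrt b * ‖gradient u x‖) * |u x| :=
        mul_le_mul_of_nonneg_right h2 (abs_nonneg _)
      have hsq : (M * Real.sqrt b * |u x|) ^ 2 = M^2 * b * u x ^ 2 := by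
        rw [mul_pow, mul_pow, Real.sq_sqrt hb0.le, sq_abs]
      nlinarith [sq_nonneg (‖gradient u x‖ / 2 - M * Real.sqrt b * |u x|),
        mul_nonneg (mul_nonneg hM (Real.sqrt_nonneg b)) (abs_nonneg (u x)),
        norm_nonneg (gradient u x)]
    calc (-((1/4) * ‖gradient u x‖ ^ 2 + M^2*b * u x ^ 2)) * (b - ‖x‖ ^ 2) ^ γ
        ≤ (⟪Matrix.toEuclideanLin κ x, gradient u x⟫ * u x) * (b - ‖x‖ ^ 2) ^ γ :=
          mul_le_mul_of_nonneg_right h3 hρg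
      _ = ⟪Matrix.toEuclideanLin κ x, gradient u x⟫ * u x * (b - ‖x‖ ^ 2) ^ γ := by ring
  have hKt : ∫ x in Metric.ball (0 : EuclideanSpace ℝ (Fin n)) (Real.sqrt b),
      (-((1/4) * ‖gradient u x‖ ^ 2 + M^2*b * u x ^ 2)) * (b - ‖x‖ ^ 2) ^ γ
      ≤ ∫ x in Metric.ball (0 : EuclideanSpace ℝ (Fin n)) (Real.sqrt b),
      ⟪Matrix.toEuclideanLin κ x, gradient u x⟫ * u x * (b - ‖x‖ ^ 2) ^ γ :=
    setIntegral_mono_on hI9.integrableOn hI4.integrableOn measurableSet_ball hpt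
  -- split the combined integrals
  have hsplit9 : ∫ x in Metric.ball (0 : EuclideanSpace ℝ (Fin n)) (Real.sqrt b),
      (-((1/4) * ‖gradient u x‖ ^ 2 + M^2*b * u x ^ 2)) * (b - ‖x‖ ^ 2) ^ γ
      = (-(1/4)) * (∫ x in Metric.ball (0 : EuclideanSpace ℝ (Fin n)) (Real.sqrt b),
          ‖gradient u x‖ ^ 2 * (b - ‖x‖ ^ 2) ^ γ)
        + (-(M^2*b)) * ∫ x in Metric.ball (0 : EuclideanSpace ℝ (Fin n)) (Real.sqrt b),
          u x ^ 2 * (b - ‖x‖ ^ 2) ^ γ := by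
    rw [show (fun x : EuclideanSpace ℝ (Fin n) =>
        (-((1/4) * ‖gradient u x‖ ^ 2 + M^2*b * u x ^ 2)) * (b - ‖x‖ ^ 2) ^ γ)
        = fun x => (-(1/4)) * (‖gradient u x‖ ^ 2 * (b - ‖x‖ ^ 2) ^ γ)
          + (-(M^2*b)) * (u x ^ 2 * (b - ‖x‖ ^ 2) ^ γ) from funext fun x => by ring]
    rw [integral_add ((hI2.const_mul _).integrableOn) ((hI5.const_mul _).integrableOn),
      integral_const_mul, integral_const_mul]
  have hsplit1 : ∫ x in Metric.ball (0 : EuclideanSpace ℝ (Fin n)) (Real.sqrt b),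
      (‖gradient u x‖ ^ 2 + u x ^ 2) * (b - ‖x‖ ^ 2) ^ γ
      = (∫ x in Metric.ball (0 : EuclideanSpace ℝ (Fin n)) (Real.sqrt b),
          ‖gradient u x‖ ^ 2 * (b - ‖x‖ ^ 2) ^ γ)
        + ∫ x in Metric.ball (0 : EuclideanSpace ℝ (Fin n)) (Real.sqrt b),
          u x ^ 2 * (b - ‖x‖ ^ 2) ^ γ := by
    rw [show (fun x : EuclideanSpace ℝ (Fin n) =>
        (‖gradient u x‖ ^ 2 + u x ^ 2) * (b - ‖x‖ ^ 2) ^ γ)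
        = fun x => ‖gradient u x‖ ^ 2 * (b - ‖x‖ ^ 2) ^ γ
          + u x ^ 2 * (b - ‖x‖ ^ 2) ^ γ from funext fun x => by ring]
    exact integral_add hI2.integrableOn hI5.integrableOn
  rw [hsplit1]
  rw [hsplit9] at hKt
  linarith [hT1, hKt, hI2pos, hI5pos]
end

section
/- Assume b > 2 and let M ≥ 0. There exist real numbers α and K with 0 < α < b/2 − 1 such that for every m in the closed ball of radius √b and every n×n real matrix κ with operator norm at most M, c(m) = −K ρ(m)² + α[ n b + (2α + 2 − n − b)‖m‖² ] + (b − 2α) ρ(m) (m·κm) < 0. -/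
/-!
Write `ρ = b - ‖m‖²`, which ranges over `[0, b]` on the closed ball. Since `‖κ‖ ≤ M`, the
drift term is at most `(b - 2α) b M ρ`, and the middle term is affine in `ρ` with value
`-α b (b - 2 - 2α) < 0` at `ρ = 0`, the choice `α < b/2 - 1` being what makes it negative.
Hence `c(m) ≤ -K ρ² + C ρ - δ` with `δ > 0`, and any `K` with `C² < 4Kδ` makes this
quadratic in `ρ` negative everywhere.
-/

open scoped RealInnerProductSpace

theorem neg_quadratic_lt_zero {K C δ : ℝ} (hK : 0 < K) (hdisc : C ^ 2 < 4 * K * δ) (x : ℝ) :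
    -K * x ^ 2 + C * x - δ < 0 := by
  nlinarith [sq_nonneg (2 * K * x - C)]

theorem real_inner_apply_le_opNorm_mul_sq {E : Type*} [NormedAddCommGroup E]
    [InnerProductSpace ℝ E] (T : E →L[ℝ] E) (x : E) : ⟪x, T x⟫ ≤ ‖T‖ * ‖x‖ ^ 2 :=
  calc ⟪x, T x⟫ ≤ ‖x‖ * ‖T x‖ := real_inner_le_norm x (T x)
    _ ≤ ‖x‖ * (‖T‖ * ‖x‖) := by gcongr; exact T.le_opNorm x
    _ = ‖T‖ * ‖x‖ ^ 2 := by ring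

theorem coefficient_le_quadratic {n b α M K s I : ℝ} (hαb : 2 * α ≤ b) (hM : 0 ≤ M)
    (hs : s ≤ b) (hI : I ≤ M * s) :
    -K * (b - s) ^ 2 + α * (n * b + (2 * α + 2 - n - b) * s) + (b - 2 * α) * (b - s) * I
      ≤ -K * (b - s) ^ 2 + (α * (n + b - 2 - 2 * α) + (b - 2 * α) * b * M) * (b - s)
        - α * b * (b - 2 - 2 * α) := by
  have hIb : I ≤ M * b := hI.trans (mul_le_mul_of_nonneg_left hs hM)
  have hdrift : (b - 2 * α) * (b - s) * I ≤ (b - 2 * α) * (b - s) * (M * b) :=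
    mul_le_mul_of_nonneg_left hIb (mul_nonneg (by linarith) (by linarith))
  linear_combination hdrift

theorem exists_alpha_K_negative_coefficient_general
    (n : ℕ) (b : ℝ) (hb : 2 < b) (M : ℝ) :
    ∃ α K : ℝ, 0 < α ∧ α < b / 2 - 1 ∧
      ∀ m ∈ Metric.closedBall (0 : EuclideanSpace ℝ (Fin n)) (Real.sqrt b),
        ∀ κ : Matrix (Fin n) (Fin n) ℝ, ‖Matrix.toEuclideanCLM (𝕜 := ℝ) κ‖ ≤ M →
          -K * (b - ‖m‖ ^ 2) ^ 2
            + α * ((n : ℝ) * b + (2 * α + 2 - (n : ℝ) - b) * ‖m‖ ^ 2)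
            + (b - 2 * α) * (b - ‖m‖ ^ 2) * ⟪m, Matrix.toEuclideanLin κ m⟫ < 0 := by
  set α : ℝ := (b - 2) / 4
  set C : ℝ := α * (n + b - 2 - 2 * α) + (b - 2 * α) * b * M
  set δ : ℝ := α * b * (b - 2 - 2 * α)
  have hα : 0 < α := by simp only [α]; linarith
  have hαb : α < b / 2 - 1 := by simp only [α]; linarith
  have hδ : 0 < δ := by
    have : 0 < b - 2 - 2 * α := by linarith
    positivity
  refine ⟨α, (C ^ 2 + 1) / (4 * δ), hα, hαb, fun m hm κ hκ => ?_⟩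
  have hM : 0 ≤ M := (norm_nonneg _).trans hκ
  have hs : ‖m‖ ^ 2 ≤ b :=
    (Real.le_sqrt (norm_nonneg m) (by linarith)).1 (mem_closedBall_zero_iff.1 hm)
  have hI : ⟪m, Matrix.toEuclideanLin κ m⟫ ≤ M * ‖m‖ ^ 2 :=
    (real_inner_apply_le_opNorm_mul_sq (Matrix.toEuclideanCLM (𝕜 := ℝ) κ) m).trans
      (by gcongr)
  refine (coefficient_le_quadratic (by linarith) hM hs hI).trans_lt
    (neg_quadratic_lt_zero (by positivity) ?_ _)
  show C ^ 2 < 4 * ((C ^ 2 + 1) / (4 * δ)) * δ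
  have hK : 4 * ((C ^ 2 + 1) / (4 * δ)) * δ = C ^ 2 + 1 := by field_simp
  linarith

/-- For `b > 2` and `M ≥ 0` there exist `α`, `K` with `0 < α < b/2 − 1` such that for
every `m` in the closed ball of radius `√b` and every matrix `κ` of operator norm at
most `M`, the zeroth-order coefficient
`c(m) = −K ρ² + α[nb + (2α + 2 − n − b)‖m‖²] + (b − 2α) ρ (m·κm)` is negative, where
`ρ(m) = b − ‖m‖²`. This negativity enables the maximum-principle argument for
positivity of solutions. -/
theorem exists_alpha_K_negative_coefficient
    (n : ℕ) (hn : 1 ≤ n) (b : ℝ) (hb : 2 < b) (M : ℝ) (hM : 0 ≤ M) :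
    ∃ α K : ℝ, 0 < α ∧ α < b / 2 - 1 ∧
      ∀ m ∈ Metric.closedBall (0 : EuclideanSpace ℝ (Fin n)) (Real.sqrt b),
        ∀ κ : Matrix (Fin n) (Fin n) ℝ, ‖Matrix.toEuclideanCLM (𝕜 := ℝ) κ‖ ≤ M →
          -K * (b - ‖m‖ ^ 2) ^ 2
            + α * ((n : ℝ) * b + (2 * α + 2 - (n : ℝ) - b) * ‖m‖ ^ 2)
            + (b - 2 * α) * (b - ‖m‖ ^ 2) * ⟪m, Matrix.toEuclideanLin κ m⟫ < 0 :=
  exists_alpha_K_negative_coefficient_general n b hb M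
end
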